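/- arXiv:0805.2778 — 7 statements merged into one kernel-verified Lean document; each statement's English description precedes it below -/
import Mathlib

section
/- Let κ be an infinite regular cardinal and C a κ-bounded category satisfying the amalgamation property and the joint embedding property, and suppose there exists a dominating family F of morphisms of C with card(F) ≤ κ. Let i : C → D be a fully faithful embedding such that D has colimits of all κ-chains with values in the image of C and every object of C is κ-small in D. Then there exists an object of D_κ that is both C-homogeneous and C-universal. -/
open CategoryTheory CategoryTheory.Limits Opposite

universe w v₁ u₁ v₂ u₂

namespace Fraisse

variable {C : Type u₁} [Category.{v₁} C] {D : Type u₂} [Category.{v₂} D]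

/-- The amalgamation property. -/
def AP (C : Type u₁) [Category.{v₁} C] : Prop :=
  ∀ ⦃a b c : C⦄ (f : a ⟶ b) (g : a ⟶ c),
    ∃ (d : C) (f' : b ⟶ d) (g' : c ⟶ d), f ≫ f' = g ≫ g'

/-- The joint embedding property. -/
def JEP (C : Type u₁) [Category.{v₁} C] : Prop :=
  ∀ a b : C, ∃ c : C, Nonempty (a ⟶ c) ∧ Nonempty (b ⟶ c)

/-- A category is `κ`-bounded if every chain of length `< κ` admits a cocone. -/
def IsBounded (κ : Cardinal.{w}) (C : Type u₁) [Category.{v₁} C] : Prop :=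
  ∀ lam : Ordinal.{w}, lam < κ.ord → ∀ F : lam.ToType ⥤ C, Nonempty (Cocone F)

/-- The type of morphisms of a category, bundled with domain and codomain. -/
def Mor (C : Type u₁) [Category.{v₁} C] : Type max u₁ v₁ := Σ (a : C) (b : C), a ⟶ b

/-- A dominating family of morphisms. -/
def Dominating (F : Set (Mor C)) : Prop :=
  (∀ x : C, ∃ s ∈ F, Nonempty (x ⟶ s.1)) ∧
  ∀ s ∈ F, ∀ (x : C) (f : s.1 ⟶ x), ∃ (y : C) (g : x ⟶ y),
    (⟨s.1, y, f ≫ g⟩ : Mor C) ∈ F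

/-- `u` is `C`-homogeneous with respect to the embedding `i : C ⥤ D`. -/
def IsHomog (i : C ⥤ D) (u : D) : Prop :=
  ∀ ⦃a b : C⦄ (j : a ⟶ b) (χ : i.obj a ⟶ u), ∃ χ' : i.obj b ⟶ u, i.map j ≫ χ' = χ

/-- `u` is `C`-universal with respect to the embedding `i : C ⥤ D`. -/
def IsUniv (i : C ⥤ D) (u : D) : Prop :=
  ∀ a : C, Nonempty (i.obj a ⟶ u)

/-- `u` is `C`-ultrahomogeneous with respect to the embedding `i : C ⥤ D`. -/
def IsUltrahomog (i : C ⥤ D) (u : D) : Prop :=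
  ∀ ⦃a b : C⦄ (j : a ⟶ b) (χ₁ : i.obj a ⟶ u) (χ₂ : i.obj b ⟶ u),
    ∃ k : u ≅ u, χ₁ ≫ k.hom = i.map j ≫ χ₂

/-- An object `a` of `C` is `κ`-small in `D` if `Hom_D(i(a), -)` preserves colimits of
`κ`-chains in `D`. -/
def KappaSmall (κ : Cardinal.{w}) (i : C ⥤ D) (a : C) : Prop :=
  PreservesColimitsOfShape κ.ord.ToType (coyoneda.obj (op (i.obj a)))

/-- Membership in `D_κ`: `d` is a colimit in `D` of a `κ`-chain with values in the image
of `C`. -/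
def InDk (κ : Cardinal.{w}) (i : C ⥤ D) (d : D) : Prop :=
  ∃ (U : κ.ord.ToType ⥤ C) (c : Cocone (U ⋙ i)), Nonempty (IsColimit c) ∧ c.pt = d

/-- A limit point of a linear order: an element which is neither minimal nor a successor. -/
def IsLimitElem {α : Type w} [LinearOrder α] (j : α) : Prop :=
  (∃ m, m < j) ∧ ∀ m, m < j → ∃ m', m < m' ∧ m' < j

/-- The inclusion functor of the initial segment below `j`. -/
def segIncl {α : Type w} [LinearOrder α] (j : α) : {m : α // m < j} ⥤ α :=
  Monotone.functor (f := fun m => (m : α)) fun _ _ h => h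

/-- The cocone over the restriction of a chain `U` to the initial segment below `j`,
with point `U.obj j` and legs `U.map (u_m ⟶ u_j)`. -/
def restrCocone {α : Type w} [LinearOrder α] (U : α ⥤ C) (j : α) :
    Cocone (segIncl j ⋙ U) where
  pt := U.obj j
  ι :=
    { app := fun m => U.map (homOfLE m.2.le)
      naturality := fun m m' g => by
        dsimp [segIncl]
        rw [Category.comp_id, ← U.map_comp]
        congr 1 }

/-- A chain is continuous if at every limit point `j` the object `U.obj j`, together with
the canonical morphisms, is a colimit of the restriction of `U` below `j`. -/
def ContinuousChain {α : Type w} [LinearOrder α] (U : α ⥤ C) : Prop :=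
  ∀ j : α, IsLimitElem j → Nonempty (IsColimit (restrCocone U j))

/-- Membership in `D_κ^c`: `d` is a colimit in `D` of a continuous `κ`-chain with values
in the image of `C`. -/
def InDkc (κ : Cardinal.{w}) (i : C ⥤ D) (d : D) : Prop :=
  ∃ (U : κ.ord.ToType ⥤ C), ContinuousChain U ∧
    ∃ c : Cocone (U ⋙ i), Nonempty (IsColimit c) ∧ c.pt = d

/-- All morphisms of the full subcategory of `D` on `P` are monomorphisms (as arrows of
that full subcategory). -/
def AllMonoOn (P : D → Prop) : Prop :=
  ∀ ⦃a b : D⦄, P a → P b → ∀ (f : a ⟶ b), ∀ ⦃x : D⦄, P x →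
    ∀ (g h : x ⟶ a), g ≫ f = h ≫ f → g = h

/-- A Fraïssé sequence. -/
def IsFraisseSeq {α : Type w} [LinearOrder α] (U : α ⥤ C) : Prop :=
  (∀ a : C, ∃ j : α, Nonempty (a ⟶ U.obj j)) ∧
  ∀ (j : α) (x : C) (f : U.obj j ⟶ x),
    ∃ (l : α) (h : j ≤ l) (g : x ⟶ U.obj l), U.map (homOfLE h) = f ≫ g

/-- The extension property for a chain. -/
def HasExtProp {α : Type w} [LinearOrder α] (U : α ⥤ C) : Prop :=
  ∀ ⦃a b : C⦄ (f : a ⟶ b) (j : α) (g : a ⟶ U.obj j),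
    ∃ (l : α) (h : j ≤ l) (k : b ⟶ U.obj l), g ≫ U.map (homOfLE h) = f ≫ k

/-!
A Fraïssé sequence `u : κ ⥤ C` is built by transfinite recursion. At stage `j` one takes a
cocone over the chain built so far (`κ`-boundedness), amalgamates it with the arrow of `F`
scheduled for stage `j` if that arrow starts at an earlier `u_k` (AP), and then maps it into the
domain of an arrow of `F` (domination). Since `#(F × κ) ≤ κ`, a schedule can visit every task
`(φ, k)` cofinally often, so every arrow `u_j ⟶ x` is eventually absorbed into the chain: this
is the Fraïssé property, which with JEP gives cofinality and with AP the extension property.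
In `D` the colimit of `i ∘ u` is then `C`-universal, and it is `C`-homogeneous because, by
`κ`-smallness, every arrow `i a ⟶ colim` factors through some `i u_j`.
-/

theorem Cocone.eq_of_pt_eq {J : Type*} [Category J] {H : J ⥤ C} {c c' : Cocone H}
    (h : c.pt = c'.pt) (hι : ∀ m, c.ι.app m ≫ eqToHom h = c'.ι.app m) : c = c' := by
  obtain ⟨pt, ι⟩ := c
  obtain ⟨pt', ι'⟩ := c'
  dsimp only at h
  subst h
  simp only [eqToHom_refl, Category.comp_id] at hι
  congr
  ext m
  exact hι m

section Chain

variable {α : Type w} [LinearOrder α]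

/-- Stage `j` of a transfinite construction of a chain: the objects below `j` with their legs
into the object at `j`. The transition maps below `j` are read off from earlier stages
(`Coherent.map`). -/
structure Stage (C : Type u₁) [Category.{v₁} C] (j : α) where
  obj : ∀ m, m < j → C
  top : C
  leg : ∀ m (hm : m < j), obj m hm ⟶ top

namespace Stage

structure Extends {j m : α} (T : Stage C j) (S : Stage C m) (hmj : m < j) : Prop where
  obj_eq : ∀ k (hk : k < m), T.obj k (hk.trans hmj) = S.obj k hk
  top_eq : T.obj m hmj = S.top
  leg_comp : ∀ k (hk : k < m),
    S.leg k hk ≫ eqToHom top_eq.symm ≫ T.leg m hmj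
      = eqToHom (obj_eq k hk).symm ≫ T.leg k (hk.trans hmj)

end Stage

def Coherent (p : α → Prop) (S : ∀ m, p m → Stage C m) : Prop :=
  ∀ m l (hml : m < l) (hm : p m) (hl : p l), (S l hl).Extends (S m hm) hml

namespace Coherent

variable {p : α → Prop} {S : ∀ m, p m → Stage C m} (hS : Coherent p S)

def map {m l : α} (h : m ≤ l) (hm : p m) (hl : p l) : (S m hm).top ⟶ (S l hl).top :=
  if he : m = l then eqToHom (by subst he; rfl)
  else eqToHom (hS m l (h.lt_of_ne he) hm hl).top_eq.symm ≫ (S l hl).leg m (h.lt_of_ne he)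

theorem map_self {m : α} (hm : p m) : hS.map le_rfl hm hm = 𝟙 _ := by
  simp [map]

theorem map_of_lt {m l : α} (h : m < l) (hm : p m) (hl : p l) :
    hS.map h.le hm hl = eqToHom (hS m l h hm hl).top_eq.symm ≫ (S l hl).leg m h := by
  simp [map, h.ne]

theorem map_comp {m l n : α} (h₁ : m ≤ l) (h₂ : l ≤ n) (hm : p m) (hl : p l) (hn : p n) :
    hS.map h₁ hm hl ≫ hS.map h₂ hl hn = hS.map (h₁.trans h₂) hm hn := by
  rcases h₁.eq_or_lt with rfl | h₁
  · rw [hS.map_self, Category.id_comp]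
  rcases h₂.eq_or_lt with rfl | h₂
  · rw [hS.map_self, Category.comp_id]
  rw [hS.map_of_lt h₁, hS.map_of_lt h₂, hS.map_of_lt (h₁.trans h₂), Category.assoc,
    (hS l n h₂ hl hn).leg_comp m h₁, eqToHom_trans_assoc]

-- Reducible, so that `simp` sees `hS.functor.obj m` as `(S m _).top`.
abbrev functor : {m // p m} ⥤ C where
  obj m := (S m.1 m.2).top
  map f := hS.map (leOfHom f) _ _
  map_id m := hS.map_self m.2
  map_comp f g := (hS.map_comp (leOfHom f) (leOfHom g) _ _ _).symm

end Coherent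

namespace Stage

variable {j : α} {S : ∀ m, m < j → Stage C m} (hS : Coherent (· < j) S)

abbrev ofCocone (c : Cocone hS.functor) : Stage C j where
  obj m hm := (S m hm).top
  top := c.pt
  leg m hm := c.ι.app ⟨m, hm⟩

theorem ofCocone_extends (c : Cocone hS.functor) {m : α} (hm : m < j) :
    (ofCocone hS c).Extends (S m hm) hm where
  obj_eq k hk := (hS k m hk _ hm).top_eq.symm
  top_eq := rfl
  leg_comp k hk := by
    have hw : hS.map hk.le _ hm ≫ c.ι.app ⟨m, hm⟩ = c.ι.app ⟨k, hk.trans hm⟩ :=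
      c.w (homOfLE (show (⟨k, hk.trans hm⟩ : {m // m < j}) ≤ ⟨m, hm⟩ from hk.le))
    change (S m hm).leg k hk ≫ eqToHom rfl ≫ c.ι.app ⟨m, hm⟩ = eqToHom _ ≫ c.ι.app ⟨k, _⟩
    rw [← hw, hS.map_of_lt hk]
    simp

theorem leg_of_eq_ofCocone {c : Cocone hS.functor} {T : Stage C j} (h : T = ofCocone hS c)
    (m : α) (hm : m < j) :
    T.leg m hm = eqToHom (by subst h; rfl) ≫ c.ι.app ⟨m, hm⟩ ≫ eqToHom (by subst h; rfl) := by
  subst h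
  simp

end Stage

variable [WellFoundedLT α] (ext : ∀ j : α, ∀ H : {m // m < j} ⥤ C, Cocone H)

open Classical in
noncomputable def extendStage (j : α) (S : ∀ m, m < j → Stage C m) : Stage C j :=
  if hS : Coherent (· < j) S then Stage.ofCocone hS (ext j hS.functor)
  else -- never taken, by `stages_extends`
    have : Nonempty C := by
      simp only [Coherent, not_forall] at hS
      obtain ⟨m, -, -, hm, -⟩ := hS
      exact ⟨(S m hm).top⟩
    ⟨fun _ _ => Classical.arbitrary C, Classical.arbitrary C, fun _ _ => 𝟙 _⟩

noncomputable def stages : ∀ j : α, Stage C j :=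
  WellFoundedLT.fix (extendStage ext)

theorem stages_eq (j : α) : stages ext j = extendStage ext j (fun m _ => stages ext m) :=
  WellFoundedLT.fix_eq _ j

theorem stages_eq_ofCocone {j : α} (hS : Coherent (· < j) fun m _ => stages ext m) :
    stages ext j = Stage.ofCocone hS (ext j hS.functor) := by
  rw [stages_eq, extendStage, dif_pos hS]

theorem stages_extends (l : α) : ∀ m (hm : m < l), (stages ext l).Extends (stages ext m) hm := by
  induction l using WellFoundedLT.induction with
  | ind l ih =>
  intro m hm
  have hS : Coherent (· < l) fun k _ => stages ext k := fun a b hab _ hb => ih b hb a hab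
  rw [stages_eq_ofCocone ext hS]
  exact Stage.ofCocone_extends hS _ hm

theorem coherent_stages (p : α → Prop) : Coherent p (fun m _ => stages ext m) :=
  fun m l hml _ _ => stages_extends ext l m hml

noncomputable def chainOf : α ⥤ C where
  obj j := (stages ext j).top
  map f := (coherent_stages ext fun _ => True).map (leOfHom f) trivial trivial
  map_id _ := Coherent.map_self _ _
  map_comp f g := (Coherent.map_comp _ (leOfHom f) (leOfHom g) _ _ _).symm

theorem restrCocone_chainOf (j : α) :
    restrCocone (chainOf ext) j = ext j (segIncl j ⋙ chainOf ext) := by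
  have hS := coherent_stages ext (· < j)
  have hT := stages_eq_ofCocone ext hS
  change restrCocone (chainOf ext) j = ext j hS.functor
  have hpt : (stages ext j).top = (ext j hS.functor).pt := congrArg Stage.top hT
  refine Cocone.eq_of_pt_eq hpt fun m => ?_
  change (coherent_stages ext fun _ => True).map m.2.le trivial trivial ≫ eqToHom hpt = _
  rw [Coherent.map_of_lt _ m.2, Stage.leg_of_eq_ofCocone hS hT]
  simp

end Chain

section Cardinal

variable {κ : Cardinal.{w}}

theorem mk_Iio_toType_ord_lt (j : κ.ord.ToType) : Cardinal.mk (Set.Iio j) < κ := by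
  simpa using Cardinal.mk_Iio_lt j

theorem exists_orderIso_Iio_toType (j : κ.ord.ToType) :
    ∃ o < κ.ord, Nonempty ({m // m < j} ≃o o.ToType) := by
  let o := Ordinal.type ((· < ·) : {m // m < j} → {m // m < j} → Prop)
  obtain ⟨e⟩ := Ordinal.type_eq.1 (Ordinal.type_toType o).symm
  refine ⟨o, ?_, ⟨OrderIso.ofRelIsoLT e⟩⟩
  rw [Cardinal.lt_ord, Ordinal.card_type]
  exact mk_Iio_toType_ord_lt j

theorem IsBounded.nonempty_cocone (hbd : IsBounded κ C) (j : κ.ord.ToType)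
    (H : {m // m < j} ⥤ C) : Nonempty (Cocone H) := by
  obtain ⟨o, ho, ⟨e⟩⟩ := exists_orderIso_Iio_toType j
  obtain ⟨c⟩ := hbd o ho (e.symm.equivalence.functor ⋙ H)
  exact ⟨(Cocone.whiskeringEquivalence e.symm.equivalence).inverse.obj c⟩

theorem exists_schedule (hκ : Cardinal.aleph0 ≤ κ) {T : Type w} [Nonempty T]
    (hT : Cardinal.mk T ≤ κ) : ∃ σ : κ.ord.ToType → T, ∀ t j, ∃ β, j < β ∧ σ β = t := by
  have hα : Cardinal.mk κ.ord.ToType = κ := by simp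
  have := Cardinal.nonempty_ord_toType (Cardinal.aleph0_pos.trans_le hκ).ne'
  obtain ⟨e⟩ : Nonempty (T × κ.ord.ToType ↪ κ.ord.ToType) := by
    rw [← Cardinal.le_def, Cardinal.mk_prod, Cardinal.lift_id, Cardinal.lift_id, hα]
    calc Cardinal.mk T * κ ≤ κ * κ := mul_le_mul_left hT κ
      _ = κ := Cardinal.mul_eq_self hκ
  refine ⟨fun β => (Function.invFun e β).1, fun t j => ?_⟩
  by_contra! h
  have hle (x : κ.ord.ToType) : e (t, x) ≤ j :=
    not_lt.1 fun hlt => h _ hlt (by rw [Function.leftInverse_invFun e.injective])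
  have := Cardinal.noMaxOrder hκ
  obtain ⟨j', hj'⟩ := exists_gt j
  have hinj : Function.Injective fun x => (⟨e (t, x), (hle x).trans_lt hj'⟩ : Set.Iio j') :=
    fun x y hxy => congrArg Prod.snd (e.injective (congrArg Subtype.val hxy))
  exact (hα ▸ Cardinal.mk_le_of_injective hinj).not_gt (mk_Iio_toType_ord_lt j')

end Cardinal

section FraisseSeq

theorem AP.exists_cocone_comm (hAP : AP C) {J : Type*} [Category J] {H : J ⥤ C}
    (c : Cocone H) (m : J) {a b : C} (φ : a ⟶ b) (g : a ⟶ H.obj m) :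
    ∃ (c' : Cocone H) (w : b ⟶ c'.pt), g ≫ c'.ι.app m = φ ≫ w := by
  obtain ⟨d, f', g', h⟩ := hAP φ (g ≫ c.ι.app m)
  exact ⟨c.extend g', f', by simp [h]⟩

variable {α : Type w} [LinearOrder α]

theorem exists_cocone_absorb (hAP : AP C) {F : Set (Mor C)} (hdom : Dominating F) {j : α}
    {H : {m // m < j} ⥤ C} (c : Cocone H) (φ : Mor C) (k : α) :
    ∃ c' : Cocone H, (∃ s ∈ F, s.1 = c'.pt) ∧
      ∀ (hk : k < j) (h : φ.1 = H.obj ⟨k, hk⟩),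
        ∃ w : φ.2.1 ⟶ c'.pt, eqToHom h ≫ c'.ι.app ⟨k, hk⟩ = φ.2.2 ≫ w := by
  obtain ⟨c₁, hc₁⟩ : ∃ c₁ : Cocone H, ∀ (hk : k < j) (h : φ.1 = H.obj ⟨k, hk⟩),
      ∃ w : φ.2.1 ⟶ c₁.pt, eqToHom h ≫ c₁.ι.app ⟨k, hk⟩ = φ.2.2 ≫ w := by
    by_cases hφ : ∃ (hk : k < j), φ.1 = H.obj ⟨k, hk⟩
    · obtain ⟨hk, h⟩ := hφ
      obtain ⟨c₁, w, hw⟩ := hAP.exists_cocone_comm c ⟨k, hk⟩ φ.2.2 (eqToHom h)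
      exact ⟨c₁, fun _ _ => ⟨w, hw⟩⟩
    · exact ⟨c, fun hk h => (hφ ⟨hk, h⟩).elim⟩
  obtain ⟨s, hs, ⟨e⟩⟩ := hdom.1 c₁.pt
  refine ⟨c₁.extend e, ⟨s, hs, rfl⟩, fun hk h => ?_⟩
  obtain ⟨w, hw⟩ := hc₁ hk h
  exact ⟨w ≫ e, by simp [reassoc_of% hw]⟩

theorem isFraisseSeq_of_forall_exists (hJEP : JEP C) [Nonempty α] {U : α ⥤ C}
    (hU : ∀ (j : α) (x : C) (f : U.obj j ⟶ x),
      ∃ (l : α) (h : j ≤ l) (g : x ⟶ U.obj l), U.map (homOfLE h) = f ≫ g) :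
    IsFraisseSeq U := by
  refine ⟨fun a => ?_, hU⟩
  obtain ⟨j⟩ := ‹Nonempty α›
  obtain ⟨c, ⟨f⟩, ⟨g⟩⟩ := hJEP a (U.obj j)
  obtain ⟨l, -, g', -⟩ := hU j c g
  exact ⟨l, ⟨f ≫ g'⟩⟩

theorem exists_isFraisseSeq {κ : Cardinal.{max u₁ v₁}} (hκ : Cardinal.aleph0 ≤ κ)
    (hbd : IsBounded κ C) (hAP : AP C) (hJEP : JEP C) {F : Set (Mor C)} (hdom : Dominating F)
    (hcard : Cardinal.mk F ≤ κ) : ∃ U : κ.ord.ToType ⥤ C, IsFraisseSeq U := by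
  have hκ0 : κ ≠ 0 := (Cardinal.aleph0_pos.trans_le hκ).ne'
  have := Cardinal.nonempty_ord_toType hκ0
  obtain ⟨c₀⟩ := hbd 0 (Cardinal.ord_pos.2 hκ0.bot_lt) (functorOfIsEmpty _ C)
  obtain ⟨s₀, hs₀, -⟩ := hdom.1 c₀.pt
  have : Nonempty F := ⟨⟨s₀, hs₀⟩⟩
  obtain ⟨σ, hσ⟩ := exists_schedule hκ (T := F × κ.ord.ToType) (by
    rw [Cardinal.mk_prod, Cardinal.lift_id, Cardinal.lift_id, Cardinal.mk_toType, Cardinal.card_ord]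
    exact (mul_le_mul_left hcard κ).trans (Cardinal.mul_eq_self hκ).le)
  -- stage `j` absorbs the arrow `(σ j).1` if it starts at `u_(σ j).2`
  choose ext hext₁ hext₂ using fun j (H : {m // m < j} ⥤ C) =>
    exists_cocone_absorb hAP hdom (hbd.nonempty_cocone j H).some (σ j).1.1 (σ j).2
  let U := chainOf ext
  have hobj (j) : ∃ s ∈ F, s.1 = U.obj j := by
    have := hext₁ j (segIncl j ⋙ U)
    rwa [← restrCocone_chainOf ext j] at this
  have hmap (β : κ.ord.ToType) (φ : F) (k) (hσβ : σ β = (φ, k)) (hk : k < β)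
      (h : φ.1.1 = U.obj k) : ∃ w, eqToHom h ≫ U.map (homOfLE hk.le) = φ.1.2.2 ≫ w := by
    have := hext₂ β (segIncl β ⋙ U)
    rw [← restrCocone_chainOf ext β, hσβ] at this
    exact this hk h
  refine ⟨U, isFraisseSeq_of_forall_exists hJEP fun j x f => ?_⟩
  obtain ⟨s, hs, hsj⟩ := hobj j
  obtain ⟨y, g, hφ⟩ := hdom.2 s hs x (eqToHom hsj ≫ f)
  obtain ⟨β, hjβ, hσβ⟩ := hσ (⟨_, hφ⟩, j) j
  obtain ⟨w, hw⟩ := hmap β _ j hσβ hjβ hsj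
  refine ⟨β, hjβ.le, g ≫ w, (cancel_epi (eqToHom hsj)).1 ?_⟩
  simpa using hw

theorem IsFraisseSeq.hasExtProp (hAP : AP C) {U : α ⥤ C} (hU : IsFraisseSeq U) :
    HasExtProp U := by
  intro a b f j g
  obtain ⟨d, f', g', hfg⟩ := hAP f g
  obtain ⟨l, hl, w, hw⟩ := hU.2 j d g'
  exact ⟨l, hl, f' ≫ w, by rw [hw, reassoc_of% hfg]⟩

theorem IsFraisseSeq.isUniv {U : α ⥤ C} (hU : IsFraisseSeq U) (i : C ⥤ D)
    (c : Cocone (U ⋙ i)) : IsUniv i c.pt := fun a =>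
  let ⟨j, ⟨e⟩⟩ := hU.1 a
  ⟨i.map e ≫ c.ι.app j⟩

theorem HasExtProp.isHomog {U : α ⥤ C} (hU : HasExtProp U) (i : C ⥤ D) [i.Full]
    {c : Cocone (U ⋙ i)} (hc : IsColimit c)
    (hsmall : ∀ a, PreservesColimitsOfShape α (coyoneda.obj (op (i.obj a)))) :
    IsHomog i c.pt := by
  intro a b j χ
  obtain ⟨m, y, hy⟩ :=
    Types.jointly_surjective_of_isColimit (isColimitOfPreserves (coyoneda.obj (op (i.obj a))) hc) χ
  obtain ⟨l, hl, k, hk⟩ := hU j m (i.preimage y)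
  refine ⟨i.map k ≫ c.ι.app l, ?_⟩
  rw [← Category.assoc, ← i.map_comp, ← hk, i.map_comp, i.map_preimage, Category.assoc]
  exact (congrArg (y ≫ ·) (c.w (homOfLE hl))).trans hy

end FraisseSeq

theorem statement_0_general {C : Type u₁} [Category.{v₁} C] {D : Type u₂} [Category.{v₂} D]
    (κ : Cardinal.{max u₁ v₁}) (hκ : κ.IsRegular)
    (hbd : IsBounded κ C) (hAP : AP C) (hJEP : JEP C)
    (F : Set (Mor C)) (hdom : Dominating F) (hcard : Cardinal.mk F ≤ κ)
    (i : C ⥤ D) (hfull : i.Full)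
    (hcolim : ∀ U : κ.ord.ToType ⥤ C, HasColimit (U ⋙ i))
    (hsmall : ∀ a : C, KappaSmall κ i a) :
    ∃ u : D, InDk κ i u ∧ IsHomog i u ∧ IsUniv i u := by
  obtain ⟨U, hU⟩ := exists_isFraisseSeq hκ.aleph0_le hbd hAP hJEP hdom hcard
  have := hcolim U
  refine ⟨colimit (U ⋙ i), ⟨U, _, ⟨colimit.isColimit _⟩, rfl⟩, ?_, hU.isUniv i _⟩
  exact (hU.hasExtProp hAP).isHomog i (colimit.isColimit _) hsmall

/-- If `κ` is an infinite regular cardinal, `C` is a `κ`-bounded category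
satisfying AP and JEP with a dominating family of morphisms of cardinality `≤ κ`, and
`i : C ⥤ D` is a fully faithful embedding such that `D` has colimits of all `κ`-chains with
values in the image of `C` and every object of `C` is `κ`-small in `D`, then there is an
object of `D_κ` which is `C`-homogeneous and `C`-universal. -/
theorem statement_0 {C : Type u₁} [Category.{v₁} C] {D : Type u₂} [Category.{v₂} D]
    (κ : Cardinal.{max u₁ v₁}) (hκ : κ.IsRegular)
    (hbd : IsBounded κ C) (hAP : AP C) (hJEP : JEP C)
    (F : Set (Mor C)) (hdom : Dominating F) (hcard : Cardinal.mk F ≤ κ)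
    (i : C ⥤ D) (hfull : i.Full) (hfaith : i.Faithful)
    (hcolim : ∀ U : κ.ord.ToType ⥤ C, HasColimit (U ⋙ i))
    (hsmall : ∀ a : C, KappaSmall κ i a) :
    ∃ u : D, InDk κ i u ∧ IsHomog i u ∧ IsUniv i u :=
  statement_0_general κ hκ hbd hAP hJEP F hdom hcard i hfull hcolim hsmall

end Fraisse
end

section
/- Let κ be an infinite regular cardinal and C a κ-bounded category satisfying the amalgamation property and the joint embedding property, with a dominating family of morphisms of cardinality at most κ. Let i : C → D be a fully faithful embedding such that D has colimits of all κ-chains with values in the image of C and every object of C is κ-small in D. If in addition all morphisms of D_κ^c are monomorphisms (as arrows of D_κ^c), then every C-homogeneous and C-universal object of D_κ^c is C-ultrahomogeneous, and any two C-homogeneous and C-universal objects of D_κ^c are isomorphic. -/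
open CategoryTheory CategoryTheory.Limits Opposite

universe w v₁ u₁ v₂ u₂

namespace Fraisse

variable {C : Type u₁} [Category.{v₁} C] {D : Type u₂} [Category.{v₂} D]

/-!
Write `u` and `v` as colimits of continuous `κ`-chains `U` and `V` in `C`. Smallness lets a
morphism from `i a` into `u` factor through a stage of `U`; combined with homogeneity and the
cancellation supplied by the monomorphism hypothesis, this shows that `U` absorbs every morphism
`ψ : U_p ⟶ b`, i.e. some `φ : b ⟶ U_r` makes `ψ ≫ φ` the chain map. Starting from a morphism
`U_a ⟶ V_b`, a back-and-forth of length `κ` then builds a ladder of rungs `U_a ⟶ V_b ⟶ U_a'`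
climbing both chains; at limit stages continuity of `U` and regularity of `κ` provide the next
rung. The two halves of the ladder induce mutually inverse morphisms between the colimits.
-/

open Order Cardinal Set

section Chains

variable {J : Type*}

theorem map_homOfLE_comp [Preorder J] (U : J ⥤ C) {x y z : J} (h : x ≤ y) (h' : y ≤ z) :
    U.map (homOfLE h) ≫ U.map (homOfLE h') = U.map (homOfLE (h.trans h')) := by
  rw [← U.map_comp, homOfLE_comp]

theorem map_homOfLE_comp_assoc [Preorder J] (U : J ⥤ C) {x y z : J} (h : x ≤ y) (h' : y ≤ z)
    {c : C} (f : U.obj z ⟶ c) :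
    U.map (homOfLE h) ≫ U.map (homOfLE h') ≫ f = U.map (homOfLE (h.trans h')) ≫ f := by
  rw [← Category.assoc, map_homOfLE_comp]

theorem map_homOfLE_self [Preorder J] (U : J ⥤ C) {x : J} (h : x ≤ x) :
    U.map (homOfLE h) = 𝟙 (U.obj x) :=
  (congrArg U.map (Subsingleton.elim _ _)).trans (U.map_id x)

theorem map_comp_ι [Preorder J] {U : J ⥤ C} (i : C ⥤ D) (c : Cocone (U ⋙ i)) {p q : J}
    (h : p ≤ q) : i.map (U.map (homOfLE h)) ≫ c.ι.app q = c.ι.app p :=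
  c.w (homOfLE h)

variable [LinearOrder J] {U V : J ⥤ C}

structure Rung (U V : J ⥤ C) where
  a : J
  b : J
  a' : J
  lt : a < a'
  ψ : U.obj a ⟶ V.obj b
  φ : V.obj b ⟶ U.obj a'
  ψ_φ : ψ ≫ φ = U.map (homOfLE lt.le)

namespace Rung

structure Precedes (d e : Rung U V) : Prop where
  a'_le : d.a' ≤ e.a
  b_le : d.b ≤ e.b
  φ_ψ : d.φ ≫ U.map (homOfLE a'_le) ≫ e.ψ = V.map (homOfLE b_le)

variable {d e f : Rung U V}

theorem Precedes.a_lt (h : d.Precedes e) : d.a < e.a :=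
  d.lt.trans_le h.a'_le

theorem Precedes.map_ψ (h : d.Precedes e) :
    U.map (homOfLE h.a_lt.le) ≫ e.ψ = d.ψ ≫ V.map (homOfLE h.b_le) := by
  rw [← map_homOfLE_comp U d.lt.le h.a'_le, ← d.ψ_φ, ← h.φ_ψ]
  simp only [Category.assoc]

theorem Precedes.map_φ (h : d.Precedes e) :
    V.map (homOfLE h.b_le) ≫ e.φ = d.φ ≫ U.map (homOfLE (h.a'_le.trans e.lt.le)) := by
  rw [← h.φ_ψ]
  simp only [Category.assoc]
  rw [e.ψ_φ, map_homOfLE_comp]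

theorem Precedes.trans_of_map_ψ (hde : d.Precedes e) (ha : e.a ≤ f.a) (hb : e.b ≤ f.b)
    (hψ : U.map (homOfLE ha) ≫ f.ψ = e.ψ ≫ V.map (homOfLE hb)) : d.Precedes f where
  a'_le := hde.a'_le.trans ha
  b_le := hde.b_le.trans hb
  φ_ψ := by
    rw [← map_homOfLE_comp_assoc U hde.a'_le ha, hψ, ← map_homOfLE_comp V hde.b_le hb,
      ← hde.φ_ψ]
    simp only [Category.assoc]

theorem Precedes.trans (hde : d.Precedes e) (hef : e.Precedes f) : d.Precedes f :=
  hde.trans_of_map_ψ hef.a_lt.le hef.b_le hef.map_ψ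

def map (F : C ⥤ D) (d : Rung U V) : Rung (U ⋙ F) (V ⋙ F) where
  a := d.a
  b := d.b
  a' := d.a'
  lt := d.lt
  ψ := F.map d.ψ
  φ := F.map d.φ
  ψ_φ := by rw [← F.map_comp, d.ψ_φ]; rfl

theorem Precedes.map (F : C ⥤ D) (h : d.Precedes e) : (d.map F).Precedes (e.map F) where
  a'_le := h.a'_le
  b_le := h.b_le
  φ_ψ := by
    simp only [Rung.map, Functor.comp_map, ← F.map_comp, h.φ_ψ]

end Rung

theorem map_ψ_of_le {X : J → Rung U V} {s t : J} (hst : s ≤ t)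
    (h : s < t → (X s).Precedes (X t)) (ha : (X s).a ≤ (X t).a) (hb : (X s).b ≤ (X t).b) :
    U.map (homOfLE ha) ≫ (X t).ψ = (X s).ψ ≫ V.map (homOfLE hb) := by
  rcases hst.eq_or_lt with rfl | hlt
  · rw [map_homOfLE_self, map_homOfLE_self, Category.id_comp, Category.comp_id]
  · exact (h hlt).map_ψ

structure IsLadder (X : J → Rung U V) : Prop where
  le_a : ∀ t, t ≤ (X t).a
  le_b : ∀ t, t ≤ (X t).b
  precedes : ∀ ⦃s t⦄, s < t → (X s).Precedes (X t)

namespace IsLadder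

variable {X : J → Rung U V}

theorem monotone_a (hX : IsLadder X) : Monotone fun t => (X t).a := fun _ _ h =>
  h.eq_or_lt.elim (fun h => h ▸ le_rfl) fun h => (hX.precedes h).a_lt.le

theorem monotone_b (hX : IsLadder X) : Monotone fun t => (X t).b := fun _ _ h =>
  h.eq_or_lt.elim (fun h => h ▸ le_rfl) fun h => (hX.precedes h).b_le

theorem monotone_a' (hX : IsLadder X) : Monotone fun t => (X t).a' := fun _ _ h =>
  h.eq_or_lt.elim (fun h => h ▸ le_rfl) fun h => (hX.precedes h).a'_le.trans (X _).lt.le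

theorem map_ψ (hX : IsLadder X) {s t : J} (h : s ≤ t) :
    U.map (homOfLE (hX.monotone_a h)) ≫ (X t).ψ = (X s).ψ ≫ V.map (homOfLE (hX.monotone_b h)) :=
  map_ψ_of_le h (fun h => hX.precedes h) _ _

theorem map_φ (hX : IsLadder X) {s t : J} (h : s ≤ t) :
    V.map (homOfLE (hX.monotone_b h)) ≫ (X t).φ =
      (X s).φ ≫ U.map (homOfLE (hX.monotone_a' h)) := by
  rcases h.eq_or_lt with rfl | hlt
  · rw [map_homOfLE_self, map_homOfLE_self, Category.id_comp, Category.comp_id]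
  · exact (hX.precedes hlt).map_φ

theorem map (hX : IsLadder X) (F : C ⥤ D) : IsLadder fun t => (X t).map F where
  le_a := hX.le_a
  le_b := hX.le_b
  precedes _ _ h := (hX.precedes h).map F

end IsLadder

end Chains

section Iso

variable {J : Type*} [LinearOrder J] [NoMaxOrder J]

theorem IsLadder.exists_iso {P Q : J ⥤ D} {X : J → Rung P Q} (hX : IsLadder X)
    {cP : Cocone P} {cQ : Cocone Q} (hP : IsColimit cP) (hQ : IsColimit cQ) :
    ∃ k : cP.pt ≅ cQ.pt, ∀ t, cP.ι.app (X t).a ≫ k.hom = (X t).ψ ≫ cQ.ι.app (X t).b := by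
  have : hX.monotone_a.functor.Final :=
    (Monotone.final_functor_iff _).2 fun t => ⟨t, hX.le_a t⟩
  have : hX.monotone_b.functor.Final :=
    (Monotone.final_functor_iff _).2 fun t => ⟨t, hX.le_b t⟩
  have hPa := (Functor.Final.isColimitWhiskerEquiv hX.monotone_a.functor cP).symm hP
  have hQb := (Functor.Final.isColimitWhiskerEquiv hX.monotone_b.functor cQ).symm hQ
  let f : cP.pt ⟶ cQ.pt := hPa.desc
    { pt := cQ.pt
      ι :=
        { app := fun t => (X t).ψ ≫ cQ.ι.app (X t).b
          naturality := fun s t h => by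
            dsimp only [Functor.comp_obj, Monotone.functor_obj, Functor.const_obj_obj,
              Functor.comp_map, Functor.const_obj_map]
            rw [Category.comp_id]
            exact ((reassoc_of% hX.map_ψ (leOfHom h)) _).trans (by rw [cQ.w]) } }
  let g : cQ.pt ⟶ cP.pt := hQb.desc
    { pt := cP.pt
      ι :=
        { app := fun t => (X t).φ ≫ cP.ι.app (X t).a'
          naturality := fun s t h => by
            dsimp only [Functor.comp_obj, Monotone.functor_obj, Functor.const_obj_obj,
              Functor.comp_map, Functor.const_obj_map]
            rw [Category.comp_id]
            exact ((reassoc_of% hX.map_φ (leOfHom h)) _).trans (by rw [cP.w]) } }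
  have hf : ∀ t, cP.ι.app (X t).a ≫ f = (X t).ψ ≫ cQ.ι.app (X t).b := hPa.fac _
  have hg : ∀ t, cQ.ι.app (X t).b ≫ g = (X t).φ ≫ cP.ι.app (X t).a' := hQb.fac _
  refine ⟨⟨f, g, hPa.hom_ext fun t => ?_, hQb.hom_ext fun t => ?_⟩, hf⟩
  · dsimp only [Functor.comp_obj, Monotone.functor_obj, Cocone.whisker_pt, Cocone.whisker_ι,
      Functor.whiskerLeft_app]
    rw [reassoc_of% hf, hg, reassoc_of% (X t).ψ_φ, cP.w, Category.comp_id]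
  · obtain ⟨s, hts⟩ := exists_gt t
    have hst := hX.precedes hts
    dsimp only [Functor.comp_obj, Monotone.functor_obj, Cocone.whisker_pt, Cocone.whisker_ι,
      Functor.whiskerLeft_app]
    rw [reassoc_of% hg, ← cP.w (homOfLE hst.a'_le), Category.assoc, hf,
      reassoc_of% hst.φ_ψ, cQ.w, Category.comp_id]

end Iso

theorem exists_forall_of_forall_extend {J β : Type*} [LT J] [WellFoundedLT J] [Nonempty β]
    (P : J → β → Prop) (R : β → β → Prop)
    (extend : ∀ t (X : J → β), (∀ s < t, P s (X s) ∧ ∀ r < s, R (X r) (X s)) →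
      ∃ d, P t d ∧ ∀ s < t, R (X s) d) :
    ∃ X : J → β, ∀ t, P t (X t) ∧ ∀ s < t, R (X s) (X t) := by
  classical
  let X : J → β := wellFounded_lt.fix fun t prior =>
    if h : ∃ d, P t d ∧ ∀ s (hs : s < t), R (prior s hs) d then h.choose
    else Classical.arbitrary β
  refine ⟨X, fun t => ?_⟩
  induction t using WellFoundedLT.induction with
  | _ t ih =>
    have hext := extend t X ih
    rw [show X t = _ from wellFounded_lt.fix_eq _ t, dif_pos hext]
    exact hext.choose_spec

theorem exists_isLimitElem_cofinal {J : Type*} [LinearOrder J] [WellFoundedLT J] [SuccOrder J]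
    [NoMaxOrder J] {t : J} (ht : IsSuccLimit t) {a : J → J}
    (ha : StrictMonoOn a (Iio t)) (hle : ∀ s < t, s ≤ a s) (hbdd : BddAbove (a '' Iio t)) :
    ∃ j, IsLimitElem j ∧ t ≤ j ∧ (∀ s < t, a s < j) ∧ ∀ m < j, ∃ s < t, m ≤ a s := by
  obtain ⟨j, hj, hmin⟩ := wellFounded_lt.has_min _ hbdd
  have hcof : ∀ m < j, ∃ s < t, m < a s := fun m hm => by
    by_contra! h
    exact hmin m (fun _ ⟨s, hs, hsm⟩ => hsm ▸ h s hs) hm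
  have hlt : ∀ s < t, a s < j := fun s hs =>
    (ha hs (ht.succ_lt hs) (lt_succ s)).trans_le (hj ⟨succ s, ht.succ_lt hs, rfl⟩)
  obtain ⟨s₀, hs₀⟩ := not_isMin_iff.1 ht.not_isMin
  refine ⟨j, ⟨⟨a s₀, hlt s₀ hs₀⟩, fun m hm => ?_⟩, ?_, hlt, fun m hm => ?_⟩
  · obtain ⟨s, hs, hms⟩ := hcof m hm
    exact ⟨a s, hms, hlt s hs⟩
  · by_contra! hjt
    exact (hle _ (ht.succ_lt hjt)).not_gt ((hlt _ (ht.succ_lt hjt)).trans (lt_succ j))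
  · obtain ⟨s, hs, hms⟩ := hcof m hm
    exact ⟨s, hs, hms.le⟩

section Absorption

variable {J : Type*} [LinearOrder J] {U V : J ⥤ C}

-- The second clause of `IsFraisseSeq`.
def Absorbs (U : J ⥤ C) : Prop :=
  ∀ ⦃j : J⦄ ⦃x : C⦄ (f : U.obj j ⟶ x),
    ∃ (l : J) (h : j ≤ l) (g : x ⟶ U.obj l), U.map (homOfLE h) = f ≫ g

theorem Absorbs.exists_ge (hU : Absorbs U) {j : J} {x : C} (f : U.obj j ⟶ x) (r : J) :
    ∃ (l : J) (h : j ≤ l), r ≤ l ∧ ∃ g : x ⟶ U.obj l, U.map (homOfLE h) = f ≫ g := by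
  obtain ⟨l, h, g, hg⟩ := hU f
  refine ⟨max l r, h.trans (le_max_left l r), le_max_right l r,
    g ≫ U.map (homOfLE (le_max_left l r)), ?_⟩
  rw [← Category.assoc, ← hg, map_homOfLE_comp]

theorem Absorbs.exists_gt [NoMaxOrder J] (hU : Absorbs U) {j : J} {x : C} (f : U.obj j ⟶ x) :
    ∃ (l : J) (h : j < l) (g : x ⟶ U.obj l), U.map (homOfLE h.le) = f ≫ g := by
  obtain ⟨r, hr⟩ := NoMaxOrder.exists_gt j
  obtain ⟨l, h, hrl, g, hg⟩ := hU.exists_ge f r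
  exact ⟨l, hr.trans_le hrl, g, hg⟩

noncomputable def Rung.ofAbsorbs [NoMaxOrder J] (hU : Absorbs U) {a b : J}
    (ψ : U.obj a ⟶ V.obj b) : Rung U V where
  a := a
  b := b
  a' := (hU.exists_gt ψ).choose
  lt := (hU.exists_gt ψ).choose_spec.choose
  ψ := ψ
  φ := (hU.exists_gt ψ).choose_spec.choose_spec.choose
  ψ_φ := (hU.exists_gt ψ).choose_spec.choose_spec.choose_spec.symm

variable [NoMaxOrder J]

theorem Rung.exists_precedes (hU : Absorbs U) (hV : Absorbs V) (d : Rung U V) (t : J) :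
    ∃ e : Rung U V, t ≤ e.a ∧ t ≤ e.b ∧ d.Precedes e := by
  obtain ⟨b, hb, htb, ψ, hψ⟩ := hV.exists_ge (d.φ ≫ U.map (homOfLE (le_max_left d.a' t))) t
  exact ⟨Rung.ofAbsorbs hU ψ, le_max_right d.a' t, htb,
    ⟨le_max_left d.a' t, hb, (hψ.trans (Category.assoc _ _ _)).symm⟩⟩

variable [WellFoundedLT J] [SuccOrder J]

theorem exists_rung_of_isSuccLimit (hbdd : ∀ (t : J) (f : J → J), BddAbove (f '' Iio t))
    (hUc : ContinuousChain U) (hU : Absorbs U) {t : J} (ht : IsSuccLimit t)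
    {X : J → Rung U V} (hX : ∀ s < t, s ≤ (X s).a ∧ ∀ r < s, (X r).Precedes (X s)) :
    ∃ e : Rung U V, t ≤ e.a ∧ t ≤ e.b ∧ ∀ s < t, (X s).Precedes e := by
  have ha : StrictMonoOn (fun s => (X s).a) (Iio t) := fun r _ s hs hrs =>
    ((hX s hs).2 r hrs).a_lt
  have hb : MonotoneOn (fun s => (X s).b) (Iio t) := fun r _ s hs hrs =>
    hrs.eq_or_lt.elim (fun h => h ▸ le_rfl) fun h => ((hX s hs).2 r h).b_le
  obtain ⟨j, hj, htj, hlt, hcof⟩ :=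
    exists_isLimitElem_cofinal ht ha (fun s hs => (hX s hs).1) (hbdd t _)
  obtain ⟨B, hB⟩ := hbdd t fun s => (X s).b
  have hbB : ∀ s < t, (X s).b ≤ max B t := fun s hs => (hB ⟨s, hs, rfl⟩).trans (le_max_left B t)
  -- `j` is the supremum of the `(X s).a`, so `U.obj j` is the colimit along them.
  let F : {s // s < t} ⥤ {m // m < j} :=
    Monotone.functor (f := fun s => ⟨(X s).a, hlt s s.2⟩) fun r s h => ha.monotoneOn r.2 s.2 h
  have : F.Final := (Monotone.final_functor_iff _).2 fun m => by
    obtain ⟨s, hs, hms⟩ := hcof m m.2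
    exact ⟨⟨s, hs⟩, hms⟩
  obtain ⟨hj⟩ := hUc j hj
  have hF := (Functor.Final.isColimitWhiskerEquiv F _).symm hj
  let c : Cocone (F ⋙ segIncl j ⋙ U) :=
    { pt := V.obj (max B t)
      ι :=
        { app := fun s => (X s).ψ ≫ V.map (homOfLE (hbB s s.2))
          naturality := fun r s h => by
            dsimp only [Functor.comp_obj, Functor.const_obj_obj, Functor.comp_map,
              Functor.const_obj_map]
            rw [Category.comp_id]
            refine ((reassoc_of% map_ψ_of_le (X := X) (leOfHom h) (fun h => (hX s s.2).2 r h)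
              (ha.monotoneOn r.2 s.2 (leOfHom h)) (hb r.2 s.2 (leOfHom h))) _).trans ?_
            exact congrArg _ (map_homOfLE_comp _ _ _) } }
  refine ⟨Rung.ofAbsorbs hU (hF.desc c), htj, le_max_right B t, fun s hs => ?_⟩
  have hm : succ s < t := ht.succ_lt hs
  exact ((hX _ hm).2 s (lt_succ s)).trans_of_map_ψ (hlt _ hm).le (hbB _ hm) (hF.fac c ⟨_, hm⟩)

theorem exists_ladder (hbdd : ∀ (t : J) (f : J → J), BddAbove (f '' Iio t))
    (hUc : ContinuousChain U) (hU : Absorbs U) (hV : Absorbs V) (d₀ : Rung U V) :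
    ∃ X : J → Rung U V, IsLadder X ∧ ∃ t, X t = d₀ := by
  have : Nonempty (Rung U V) := ⟨d₀⟩
  obtain ⟨X, hX⟩ := exists_forall_of_forall_extend
    (fun t d => t ≤ d.a ∧ t ≤ d.b ∧ (IsMin t → d = d₀)) Rung.Precedes fun t X hX => by
      rcases isMin_or_mem_range_succ_or_isSuccLimit t with hmin | ⟨s, rfl⟩ | hlim
      · exact ⟨d₀, ⟨not_lt.1 hmin.not_lt, not_lt.1 hmin.not_lt, fun _ => rfl⟩,
          fun s hs => (hmin.not_lt hs).elim⟩
      · obtain ⟨e, hta, htb, hse⟩ := (X s).exists_precedes hU hV (succ s)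
        refine ⟨e, ⟨hta, htb, fun h => (h.not_lt (lt_succ s)).elim⟩, fun r hr => ?_⟩
        rcases (le_of_lt_succ hr).eq_or_lt with rfl | hrs
        · exact hse
        · exact ((hX s (lt_succ s)).2 r hrs).trans hse
      · obtain ⟨e, hta, htb, he⟩ := exists_rung_of_isSuccLimit hbdd hUc hU hlim
          fun s hs => ⟨(hX s hs).1.1, (hX s hs).2⟩
        exact ⟨e, ⟨hta, htb, fun h => (hlim.not_isMin h).elim⟩, he⟩
  obtain ⟨m, -, hm⟩ := wellFounded_lt.has_min (univ : Set J) ⟨d₀.a, trivial⟩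
  exact ⟨X, ⟨fun t => (hX t).1.1, fun t => (hX t).1.2.1, fun s t h => (hX t).2 s h⟩,
    m, (hX m).1.2.2 fun x _ => not_lt.1 (hm x trivial)⟩

end Absorption

section Kappa

variable {κ : Cardinal.{w}}

theorem bddAbove_image_Iio (hκ : κ.IsRegular) (t : κ.ord.ToType)
    (f : κ.ord.ToType → κ.ord.ToType) : BddAbove (f '' Iio t) := by
  by_contra h
  have hcof : IsCofinal (f '' Iio t) := fun x =>
    let ⟨y, hy, hxy⟩ := not_bddAbove_iff.1 h x
    ⟨y, hy, hxy.le⟩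
  have := (Order.cof_le hcof).trans mk_image_le
  rw [Ordinal.cof_toType, hκ.cof_ord] at this
  exact this.not_gt (by simpa using mk_Iio_lt t)

theorem continuousChain_const {J : Type w} [LinearOrder J] (a : C) :
    ContinuousChain ((Functor.const J).obj a) := fun j hj =>
  have : Nonempty {m // m < j} := let ⟨m, hm⟩ := hj.1; ⟨⟨m, hm⟩⟩
  ⟨isColimitConstCocone _ a⟩

theorem inDkc_obj [Nonempty κ.ord.ToType] (i : C ⥤ D) (a : C) : InDkc κ i (i.obj a) :=
  ⟨_, continuousChain_const a, _,
    ⟨(IsColimit.precomposeHomEquiv (Functor.constComp _ a i) _).symm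
      (isColimitConstCocone _ _)⟩, rfl⟩

theorem eq_of_map_comp_eq [Nonempty κ.ord.ToType] {i : C ⥤ D} [i.Faithful]
    (hmono : AllMonoOn (InDkc κ i)) {w : D} (hw : InDkc κ i w) {x b : C} (χ : i.obj b ⟶ w)
    {g h : x ⟶ b} (H : i.map g ≫ χ = i.map h ≫ χ) : g = h :=
  i.map_injective (hmono (inDkc_obj i b) hw χ (inDkc_obj i x) _ _ H)

theorem KappaSmall.exists_map_comp_eq {i : C ⥤ D} [i.Full] {a : C} (ha : KappaSmall κ i a)
    {W : κ.ord.ToType ⥤ C} {c : Cocone (W ⋙ i)} (hc : IsColimit c) (χ : i.obj a ⟶ c.pt) :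
    ∃ (j : κ.ord.ToType) (ρ : a ⟶ W.obj j), i.map ρ ≫ c.ι.app j = χ := by
  have : PreservesColimitsOfShape κ.ord.ToType (coyoneda.obj (op (i.obj a))) := ha
  obtain ⟨j, y, hy⟩ := Types.jointly_surjective_of_isColimit
    (isColimitOfPreserves (coyoneda.obj (op (i.obj a))) hc) χ
  exact ⟨j, i.preimage y, (congrArg (· ≫ c.ι.app j) (i.map_preimage y)).trans hy⟩

theorem absorbs_of_isHomog [Nonempty κ.ord.ToType] {i : C ⥤ D} [i.Full] [i.Faithful]
    (hsmall : ∀ a : C, KappaSmall κ i a) (hmono : AllMonoOn (InDkc κ i))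
    {U : κ.ord.ToType ⥤ C} {c : Cocone (U ⋙ i)} (hc : IsColimit c) (hcD : InDkc κ i c.pt)
    (hhom : IsHomog i c.pt) : Absorbs U := by
  intro p b ψ
  obtain ⟨χ, hχ⟩ := hhom ψ (c.ι.app p)
  obtain ⟨r, φ, hφ⟩ := (hsmall b).exists_map_comp_eq hc χ
  refine ⟨max p r, le_max_left p r, φ ≫ U.map (homOfLE (le_max_right p r)),
    eq_of_map_comp_eq hmono hcD (c.ι.app (max p r)) ?_⟩
  simp only [Functor.map_comp, Category.assoc, map_comp_ι, hφ, hχ]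

end Kappa

theorem exists_iso_comp_eq {κ : Cardinal.{w}} (hκ : κ.IsRegular) {i : C ⥤ D} [i.Full]
    [i.Faithful] (hsmall : ∀ a : C, KappaSmall κ i a) (hmono : AllMonoOn (InDkc κ i))
    {u v : D} (hu : InDkc κ i u) (hv : InDkc κ i v) (huh : IsHomog i u) (hvh : IsHomog i v)
    {a : C} (χ₁ : i.obj a ⟶ u) (χ₂ : i.obj a ⟶ v) : ∃ k : u ≅ v, χ₁ ≫ k.hom = χ₂ := by
  have := noMaxOrder hκ.aleph0_le
  have : Nonempty κ.ord.ToType := by simpa using hκ.pos.ne'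
  obtain ⟨U, hUc, cu, ⟨hcu⟩, rfl⟩ := id hu
  obtain ⟨V, -, cv, ⟨hcv⟩, rfl⟩ := id hv
  have hU := absorbs_of_isHomog hsmall hmono hcu hu huh
  have hV := absorbs_of_isHomog hsmall hmono hcv hv hvh
  obtain ⟨a₀, ρ, hρ⟩ := (hsmall a).exists_map_comp_eq hcu χ₁
  obtain ⟨χ₂', hχ₂'⟩ := hvh ρ χ₂
  obtain ⟨b₀, ψ₀, hψ₀⟩ := (hsmall _).exists_map_comp_eq hcv χ₂'
  obtain ⟨X, hX, t, hXt⟩ :=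
    exists_ladder (bddAbove_image_Iio hκ) hUc hU hV (Rung.ofAbsorbs hU ψ₀)
  obtain ⟨k, hk⟩ := (hX.map i).exists_iso hcu hcv
  have hseed : cu.ι.app a₀ ≫ k.hom = i.map ψ₀ ≫ cv.ι.app b₀ := by
    have := hk t
    rwa [hXt] at this
  refine ⟨k, ?_⟩
  rw [← hρ, Category.assoc, hseed, hψ₀, hχ₂']

theorem statement_1_general {C : Type u₁} [Category.{v₁} C] {D : Type u₂} [Category.{v₂} D]
    (κ : Cardinal.{max u₁ v₁}) (hκ : κ.IsRegular)
    (i : C ⥤ D) (hfull : i.Full) (hfaith : i.Faithful)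
    (hsmall : ∀ a : C, KappaSmall κ i a)
    (hmono : AllMonoOn (InDkc κ i)) :
    (∀ u : D, InDkc κ i u → IsHomog i u → IsUniv i u → IsUltrahomog i u) ∧
    (∀ u v : D, InDkc κ i u → IsHomog i u → IsUniv i u →
      InDkc κ i v → IsHomog i v → IsUniv i v → Nonempty (u ≅ v)) := by
  refine ⟨fun u hu huh _ a b j χ₁ χ₂ => ?_, fun u v hu huh _ hv hvh hvu => ?_⟩
  · exact exists_iso_comp_eq hκ hsmall hmono hu hu huh huh χ₁ (i.map j ≫ χ₂)
  · obtain ⟨U, -, c, -, rfl⟩ := id hu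
    obtain ⟨t⟩ : Nonempty κ.ord.ToType := by simpa using hκ.pos.ne'
    obtain ⟨χ⟩ := hvu (U.obj t)
    obtain ⟨k, -⟩ := exists_iso_comp_eq hκ hsmall hmono hu hv huh hvh (c.ι.app t) χ
    exact ⟨k⟩

/-- Under the hypotheses of Statement 0, if moreover all morphisms of
`D_κ^c` are monomorphisms (as arrows of `D_κ^c`), then every `C`-homogeneous and
`C`-universal object of `D_κ^c` is `C`-ultrahomogeneous, and any two `C`-homogeneous and
`C`-universal objects of `D_κ^c` are isomorphic. -/
theorem statement_1 {C : Type u₁} [Category.{v₁} C] {D : Type u₂} [Category.{v₂} D]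
    (κ : Cardinal.{max u₁ v₁}) (hκ : κ.IsRegular)
    (hbd : IsBounded κ C) (hAP : AP C) (hJEP : JEP C)
    (F : Set (Mor C)) (hdom : Dominating F) (hcard : Cardinal.mk F ≤ κ)
    (i : C ⥤ D) (hfull : i.Full) (hfaith : i.Faithful)
    (hcolim : ∀ U : κ.ord.ToType ⥤ C, HasColimit (U ⋙ i))
    (hsmall : ∀ a : C, KappaSmall κ i a)
    (hmono : AllMonoOn (InDkc κ i)) :
    (∀ u : D, InDkc κ i u → IsHomog i u → IsUniv i u → IsUltrahomog i u) ∧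
    (∀ u v : D, InDkc κ i u → IsHomog i u → IsUniv i u →
      InDkc κ i v → IsHomog i v → IsUniv i v → Nonempty (u ≅ v)) :=
  statement_1_general κ hκ i hfull hfaith hsmall hmono

end Fraisse
end

section
/- Let κ be an infinite regular cardinal and i : C → D a fully faithful embedding such that every object of C is κ-small in D and all morphisms of D_κ are monomorphisms. If there exists an object of D_κ that is C-homogeneous and C-universal, then the category C satisfies both the amalgamation property and the joint embedding property. -/
open CategoryTheory CategoryTheory.Limits Opposite

universe w v₁ u₁ v₂ u₂

namespace Fraisse

variable {C : Type u₁} [Category.{v₁} C] {D : Type u₂} [Category.{v₂} D]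

/-!
Everything is read off inside a homogeneous universal `u = colim i(u_j)` of `D_κ`. Since
objects of `C` are `κ`-small, any two maps `i(a) → u` factor through a common stage `i(u_j)`.
For JEP, factor the maps given by universality. For AP, extend a map `i(a) → u` along `f` and
`g` by homogeneity and factor both extensions through `i(u_j)`: the two composites
`i(a) → i(u_j)` agree after the leg `i(u_j) → u`, which is a morphism of `D_κ` and hence a
monomorphism, so they agree, and full faithfulness turns them into an amalgam in `C`.
-/

lemma inDk_obj (κ : Cardinal.{w}) [Nonempty κ.ord.ToType] (i : C ⥤ D) (b : C) :
    InDk κ i (i.obj b) :=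
  ⟨(Functor.const _).obj b, _,
    ⟨(IsColimit.precomposeHomEquiv (Functor.constComp _ b i) _).symm
      (isColimitConstCocone _ (i.obj b))⟩, rfl⟩

section

variable {κ : Cardinal.{w}} {i : C ⥤ D}

lemma KappaSmall.exists_factor {a : C} (ha : KappaSmall κ i a) {F : κ.ord.ToType ⥤ D}
    {c : Cocone F} (hc : IsColimit c) (χ : i.obj a ⟶ c.pt) :
    ∃ (j : κ.ord.ToType) (φ : i.obj a ⟶ F.obj j), φ ≫ c.ι.app j = χ :=
  have : PreservesColimitsOfShape κ.ord.ToType (coyoneda.obj (op (i.obj a))) := ha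
  Types.jointly_surjective _ (isColimitOfPreserves (coyoneda.obj (op (i.obj a))) hc) χ

lemma exists_factor_pair {a₁ a₂ : C} (h₁ : KappaSmall κ i a₁) (h₂ : KappaSmall κ i a₂)
    {F : κ.ord.ToType ⥤ D} {c : Cocone F} (hc : IsColimit c)
    (χ₁ : i.obj a₁ ⟶ c.pt) (χ₂ : i.obj a₂ ⟶ c.pt) :
    ∃ (j : κ.ord.ToType) (φ₁ : i.obj a₁ ⟶ F.obj j) (φ₂ : i.obj a₂ ⟶ F.obj j),
      φ₁ ≫ c.ι.app j = χ₁ ∧ φ₂ ≫ c.ι.app j = χ₂ := by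
  obtain ⟨j₁, φ₁, hφ₁⟩ := h₁.exists_factor hc χ₁
  obtain ⟨j₂, φ₂, hφ₂⟩ := h₂.exists_factor hc χ₂
  exact ⟨max j₁ j₂, φ₁ ≫ F.map (homOfLE le_sup_left), φ₂ ≫ F.map (homOfLE le_sup_right),
    by rw [Category.assoc, c.w, hφ₁], by rw [Category.assoc, c.w, hφ₂]⟩

variable (hsmall : ∀ a : C, KappaSmall κ i a) {U : κ.ord.ToType ⥤ C} {c : Cocone (U ⋙ i)}
  (hc : IsColimit c)
include hsmall hc

lemma jep_of_isUniv [i.Full] (huniv : IsUniv i c.pt) : JEP C := by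
  intro a b
  obtain ⟨χa⟩ := huniv a
  obtain ⟨χb⟩ := huniv b
  obtain ⟨j, φa, φb, -, -⟩ := exists_factor_pair (hsmall a) (hsmall b) hc χa χb
  exact ⟨U.obj j, ⟨i.preimage φa⟩, ⟨i.preimage φb⟩⟩

lemma ap_of_isHomog_of_isUniv [i.Full] [i.Faithful] (hmono : AllMonoOn (InDk κ i))
    (hhom : IsHomog i c.pt) (huniv : IsUniv i c.pt) : AP C := by
  intro a b b' f f'
  obtain ⟨χ⟩ := huniv a
  obtain ⟨χb, hχb⟩ := hhom f χ
  obtain ⟨χb', hχb'⟩ := hhom f' χ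
  obtain ⟨j, φ, φ', hφ, hφ'⟩ := exists_factor_pair (hsmall b) (hsmall b') hc χb χb'
  have : Nonempty κ.ord.ToType := ⟨j⟩
  have amalgam : i.map f ≫ φ = i.map f' ≫ φ' :=
    hmono (inDk_obj κ i (U.obj j)) ⟨U, c, ⟨hc⟩, rfl⟩ (c.ι.app j) (inDk_obj κ i a) _ _
      (by rw [Category.assoc, Category.assoc, hφ, hφ', hχb, hχb'])
  exact ⟨U.obj j, i.preimage φ, i.preimage φ', i.map_injective (by simpa using amalgam)⟩

end

theorem statement_2_general {C : Type u₁} [Category.{v₁} C] {D : Type u₂} [Category.{v₂} D]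
    (κ : Cardinal.{w})
    (i : C ⥤ D) (hfull : i.Full) (hfaith : i.Faithful)
    (hsmall : ∀ a : C, KappaSmall κ i a)
    (hmono : AllMonoOn (InDk κ i))
    (hex : ∃ u : D, InDk κ i u ∧ IsHomog i u ∧ IsUniv i u) :
    AP C ∧ JEP C := by
  obtain ⟨_, ⟨U, c, ⟨hc⟩, rfl⟩, hhom, huniv⟩ := hex
  exact ⟨ap_of_isHomog_of_isUniv hsmall hc hmono hhom huniv, jep_of_isUniv hsmall hc huniv⟩

/-- If `κ` is an infinite regular cardinal and `i : C ⥤ D` a fully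
faithful embedding such that every object of `C` is `κ`-small in `D` and all morphisms of
`D_κ` are monomorphisms, and there exists a `C`-homogeneous and `C`-universal object of
`D_κ`, then `C` satisfies the amalgamation and joint embedding properties. -/
theorem statement_2 {C : Type u₁} [Category.{v₁} C] {D : Type u₂} [Category.{v₂} D]
    (κ : Cardinal.{w}) (hκ : κ.IsRegular)
    (i : C ⥤ D) (hfull : i.Full) (hfaith : i.Faithful)
    (hsmall : ∀ a : C, KappaSmall κ i a)
    (hmono : AllMonoOn (InDk κ i))
    (hex : ∃ u : D, InDk κ i u ∧ IsHomog i u ∧ IsUniv i u) :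
    AP C ∧ JEP C :=
  statement_2_general κ i hfull hfaith hsmall hmono hex

end Fraisse
end

section
/- Let κ be an infinite regular cardinal, C a category satisfying the amalgamation property, and i : C → D a fully faithful embedding such that every object of C is κ-small in D. If ū is a continuous κ-Fraïssé sequence in C and u is a colimit in D of (the image under i of) ū, then u is C-ultrahomogeneous. -/
open CategoryTheory CategoryTheory.Limits Opposite

universe w v₁ u₁ v₂ u₂

namespace Fraisse

variable {C : Type u₁} [Category.{v₁} C] {D : Type u₂} [Category.{v₂} D]

/-!
Back-and-forth. By `κ`-smallness `χ₁` and `χ₂` factor through stages `u_m` and `u_n` of the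
chain; amalgamation followed by the Fraïssé property then yields one morphism `u_m ⟶ u_l`
compatible with `j`, and it remains to extend a morphism `u_p ⟶ u_q` to an automorphism of `u`.
For this we build a strictly increasing `κ`-sequence of zigzags `u_p ⟶ u_q ⟶ u_r` composing to
bonding maps, each continuing all earlier ones. The Fraïssé property provides the successor
steps; at a limit step the supremum `L` of the earlier indices is still below `κ` by regularity,
and continuity of the chain at `L` glues the earlier `F`-legs into a map out of `u_L`. The
`F`-legs of the sequence define an endomorphism of `u`, and the `G`-legs its inverse.
-/

open Cardinal Set

section Chains

variable {α : Type w} [Preorder α]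

@[simp]
lemma map_homOfLE_comp_map_homOfLE (U : α ⥤ C) {x y z : α} (h : x ≤ y) (h' : y ≤ z) :
    U.map (homOfLE h) ≫ U.map (homOfLE h') = U.map (homOfLE (h.trans h')) := by
  rw [← U.map_comp, homOfLE_comp]

@[simp]
lemma map_homOfLE_comp_map_homOfLE_assoc (U : α ⥤ C) {x y z : α} (h : x ≤ y) (h' : y ≤ z)
    {X : C} (f : U.obj z ⟶ X) :
    U.map (homOfLE h) ≫ U.map (homOfLE h') ≫ f = U.map (homOfLE (h.trans h')) ≫ f := by
  rw [← Category.assoc, map_homOfLE_comp_map_homOfLE]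

@[simp]
lemma map_map_homOfLE_comp_ι (U : α ⥤ C) (i : C ⥤ D) (c : Cocone (U ⋙ i)) {m m' : α}
    (h : m ≤ m') : i.map (U.map (homOfLE h)) ≫ c.ι.app m' = c.ι.app m :=
  c.w (homOfLE h)

lemma _root_.CategoryTheory.Limits.IsColimit.exists_desc_of_forall_map_homOfLE {V : α ⥤ C}
    {c : Cocone V} (hc : IsColimit c) {X : C} (φ : ∀ m, V.obj m ⟶ X)
    (hφ : ∀ m m' (h : m ≤ m'), V.map (homOfLE h) ≫ φ m' = φ m) :
    ∃ k : c.pt ⟶ X, ∀ m, c.ι.app m ≫ k = φ m :=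
  ⟨hc.desc ⟨X,
    { app := φ
      naturality := fun m m' g => (hφ m m' g.le).trans (Category.comp_id _).symm }⟩,
    hc.fac _⟩

end Chains

section LinearChains

variable {α : Type w} [LinearOrder α] {U : α ⥤ C}

lemma ContinuousChain.exists_desc (hcont : ContinuousChain U) {L : α} (hL : IsLimitElem L)
    {X : C} (φ : ∀ m, m < L → (U.obj m ⟶ X))
    (hφ : ∀ m m' (h : m ≤ m') (hm' : m' < L),
      U.map (homOfLE h) ≫ φ m' hm' = φ m (h.trans_lt hm')) :
    ∃ F : U.obj L ⟶ X, ∀ m (hm : m < L), U.map (homOfLE hm.le) ≫ F = φ m hm :=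
  let ⟨colim⟩ := hcont L hL
  let ⟨F, hF⟩ := colim.exists_desc_of_forall_map_homOfLE (fun m => φ m.1 m.2)
    fun m m' h => hφ m m' h m'.2
  ⟨F, fun m hm => hF ⟨m, hm⟩⟩

lemma exists_endo_of_natural {V : α ⥤ C} {c : Cocone V} (hc : IsColimit c) {a b : α → α}
    (ha : Monotone a) (hb : Monotone b) (le_a : ∀ m, m ≤ a m)
    (H : ∀ s, V.obj (a s) ⟶ V.obj (b s))
    (hH : ∀ s s' (h : s ≤ s'),
      V.map (homOfLE (ha h)) ≫ H s' = H s ≫ V.map (homOfLE (hb h))) :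
    ∃ k : c.pt ⟶ c.pt, ∀ s m (hm : m ≤ a s),
      c.ι.app m ≫ k = V.map (homOfLE hm) ≫ H s ≫ c.ι.app (b s) := by
  have mono : ∀ s s' m (hm : m ≤ a s) (hm' : m ≤ a s'), s ≤ s' →
      V.map (homOfLE hm) ≫ H s ≫ c.ι.app (b s) =
        V.map (homOfLE hm') ≫ H s' ≫ c.ι.app (b s') := by
    intro s s' m hm hm' h
    calc V.map (homOfLE hm) ≫ H s ≫ c.ι.app (b s)
        = V.map (homOfLE hm) ≫ H s ≫ V.map (homOfLE (hb h)) ≫ c.ι.app (b s') := by rw [c.w]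
      _ = V.map (homOfLE hm) ≫ V.map (homOfLE (ha h)) ≫ H s' ≫ c.ι.app (b s') := by
        rw [reassoc_of% (hH s s' h)]
      _ = _ := map_homOfLE_comp_map_homOfLE_assoc _ _ _ _
  have indep : ∀ s s' m (hm : m ≤ a s) (hm' : m ≤ a s'),
      V.map (homOfLE hm) ≫ H s ≫ c.ι.app (b s) =
        V.map (homOfLE hm') ≫ H s' ≫ c.ι.app (b s') :=
    fun s s' m hm hm' => (le_total s s').elim (mono s s' m hm hm')
      fun h => (mono s' s m hm' hm h).symm
  obtain ⟨k, hk⟩ := hc.exists_desc_of_forall_map_homOfLE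
    (fun m => V.map (homOfLE (le_a m)) ≫ H m ≫ c.ι.app (b m))
    fun m m' h => by rw [map_homOfLE_comp_map_homOfLE_assoc]; apply indep
  exact ⟨k, fun s m hm => (hk m).trans (indep _ _ _ _ _)⟩

lemma IsFraisseSeq.exists_comp_eq_map [NoMaxOrder α] (hU : IsFraisseSeq U) {j : α} {x : C}
    (f : U.obj j ⟶ x) (b : α) :
    ∃ (l : α) (hjl : j ≤ l) (_ : b < l) (g : x ⟶ U.obj l),
      f ≫ g = U.map (homOfLE hjl) := by
  obtain ⟨l, hjl, g, hg⟩ := hU.2 j x f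
  obtain ⟨l', hl'⟩ := exists_gt (max l b)
  refine ⟨l', hjl.trans ((le_max_left l b).trans hl'.le), (le_max_right l b).trans_lt hl',
    g ≫ U.map (homOfLE ((le_max_left l b).trans hl'.le)), ?_⟩
  rw [← Category.assoc, ← hg, map_homOfLE_comp_map_homOfLE]

end LinearChains

lemma exists_map_comp_ι_eq {J : Type*} [Category J] {U : J ⥤ C} (i : C ⥤ D) [i.Full]
    {c : Cocone (U ⋙ i)} (hc : IsColimit c) {a : C}
    [PreservesColimit (U ⋙ i) (coyoneda.obj (op (i.obj a)))] (χ : i.obj a ⟶ c.pt) :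
    ∃ m, ∃ f : a ⟶ U.obj m, i.map f ≫ c.ι.app m = χ := by
  obtain ⟨m, y, hy⟩ := Types.jointly_surjective_of_isColimit
    (isColimitOfPreserves (coyoneda.obj (op (i.obj a))) hc) χ
  exact ⟨m, i.preimage y, by simpa using hy⟩

theorem exists_strictMono_of_forall_exists_gt {α β : Type*} [Preorder α] [WellFoundedLT α]
    [Preorder β] (h : ∀ t : α, ∀ f : Iio t → β, StrictMono f → ∃ b, ∀ s, f s < b) :
    ∃ g : α → β, StrictMono g := by
  classical
  rcases isEmpty_or_nonempty α with _ | ⟨⟨t⟩⟩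
  · exact ⟨isEmptyElim, fun a => isEmptyElim a⟩
  obtain ⟨t₀, -, ht₀⟩ := wellFounded_lt.has_min univ ⟨t, trivial⟩
  have : IsEmpty (Iio t₀) := ⟨fun s => ht₀ s trivial s.2⟩
  -- `b₀` only fills the branch of the recursion that is never taken.
  obtain ⟨b₀, -⟩ := h t₀ isEmptyElim fun s => isEmptyElim s
  let next (t : α) (prev : ∀ s, s < t → β) : β :=
    if hp : StrictMono fun s : Iio t => prev s s.2 then (h t _ hp).choose else b₀
  let g : α → β := wellFounded_lt.fix next
  have hg : ∀ t, ∀ s < t, g s < g t := by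
    refine fun t => wellFounded_lt.induction (C := fun t => ∀ s < t, g s < g t) t
      fun t ih s hs => ?_
    have hp : StrictMono fun s : Iio t => g s := fun s s' hss' => ih s' s'.2 s hss'
    have hfix : g t = next t fun s _ => g s := wellFounded_lt.fix_eq next t
    rw [hfix]
    simp only [next, dif_pos hp]
    exact (h t _ hp).choose_spec ⟨s, hs⟩
  exact ⟨g, fun s t hst => hg t s hst⟩

lemma _root_.Cardinal.IsRegular.bddAbove_range {κ : Cardinal.{w}} (hκ : κ.IsRegular)
    {t : κ.ord.ToType} (f : Iio t → κ.ord.ToType) : BddAbove (range f) := by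
  have := Cardinal.noMaxOrder hκ.aleph0_le
  rw [← not_isCofinal_iff_bddAbove]
  intro hcof
  have hle := Order.cof_le hcof
  rw [Ordinal.cof_toType, hκ.cof_ord] at hle
  exact (mk_range_le.trans_lt (by simpa using mk_Iio_lt t)).not_ge hle

section Zigzags

variable {α : Type w} [LinearOrder α] {U : α ⥤ C}

structure Zigzag (U : α ⥤ C) where
  p : α
  q : α
  r : α
  p_le_q : p ≤ q
  q_lt_r : q < r
  F : U.obj p ⟶ U.obj q
  G : U.obj q ⟶ U.obj r
  F_comp_G : F ≫ G = U.map (homOfLE (p_le_q.trans q_lt_r.le))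

namespace Zigzag

def Precedes (x y : Zigzag U) : Prop :=
  ∃ h : x.r ≤ y.p,
    x.G ≫ U.map (homOfLE h) ≫ y.F = U.map (homOfLE (x.q_lt_r.le.trans (h.trans y.p_le_q)))

lemma Precedes.r_le_p {x y : Zigzag U} (h : x.Precedes y) : x.r ≤ y.p := h.1

lemma Precedes.map_F {x y : Zigzag U} (h : x.Precedes y) :
    U.map (homOfLE ((x.p_le_q.trans x.q_lt_r.le).trans h.r_le_p)) ≫ y.F =
      x.F ≫ U.map (homOfLE (x.q_lt_r.le.trans (h.r_le_p.trans y.p_le_q))) := by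
  obtain ⟨hrp, e⟩ := h
  rw [← map_homOfLE_comp_map_homOfLE U (x.p_le_q.trans x.q_lt_r.le) hrp, ← x.F_comp_G]
  simp only [Category.assoc, e]

lemma Precedes.map_G {x y : Zigzag U} (h : x.Precedes y) :
    x.G ≫ U.map (homOfLE (h.r_le_p.trans (y.p_le_q.trans y.q_lt_r.le))) =
      U.map (homOfLE (x.q_lt_r.le.trans (h.r_le_p.trans y.p_le_q))) ≫ y.G := by
  obtain ⟨hrp, e⟩ := h
  rw [← map_homOfLE_comp_map_homOfLE U hrp (y.p_le_q.trans y.q_lt_r.le), ← y.F_comp_G,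
    ← e]
  simp only [Category.assoc]

lemma Precedes.trans {x y z : Zigzag U} (hxy : x.Precedes y) (hyz : y.Precedes z) :
    x.Precedes z := by
  refine ⟨hxy.r_le_p.trans ((y.p_le_q.trans y.q_lt_r.le).trans hyz.r_le_p), ?_⟩
  obtain ⟨hxy', e⟩ := hxy
  rw [← map_homOfLE_comp_map_homOfLE_assoc U hxy'
    ((y.p_le_q.trans y.q_lt_r.le).trans hyz.r_le_p), hyz.map_F, reassoc_of% e,
    map_homOfLE_comp_map_homOfLE]

lemma Precedes.irrefl (x : Zigzag U) : ¬ x.Precedes x :=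
  fun h => (x.p_le_q.trans_lt x.q_lt_r).not_ge h.r_le_p

instance : IsStrictOrder (Zigzag U) Precedes where
  irrefl := Precedes.irrefl
  trans _ _ _ := Precedes.trans

instance : PartialOrder (Zigzag U) := partialOrderOfSO Precedes

lemma r_le_p_of_lt {x y : Zigzag U} (h : x < y) : x.r ≤ y.p := h.r_le_p

lemma p_strictMono : StrictMono (p : Zigzag U → α) := fun x _ h =>
  (x.p_le_q.trans_lt x.q_lt_r).trans_le (r_le_p_of_lt h)

lemma q_strictMono : StrictMono (q : Zigzag U → α) := fun x y h =>
  x.q_lt_r.trans_le ((r_le_p_of_lt h).trans y.p_le_q)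

lemma r_strictMono : StrictMono (r : Zigzag U → α) := fun _ y h =>
  ((r_le_p_of_lt h).trans y.p_le_q).trans_lt y.q_lt_r

lemma map_F_of_le {x y : Zigzag U} (h : x ≤ y) :
    U.map (homOfLE (p_strictMono.monotone h)) ≫ y.F =
      x.F ≫ U.map (homOfLE (q_strictMono.monotone h)) := by
  rcases h.eq_or_lt with rfl | h
  · simp
  · exact Precedes.map_F h

lemma map_G_of_le {x y : Zigzag U} (h : x ≤ y) :
    x.G ≫ U.map (homOfLE (r_strictMono.monotone h)) =
      U.map (homOfLE (q_strictMono.monotone h)) ≫ y.G := by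
  rcases h.eq_or_lt with rfl | h
  · simp
  · exact Precedes.map_G h

lemma exists_map_comp_eq_F_comp_map_of_isLUB (hcont : ContinuousChain U) {ι : Type*}
    [LinearOrder ι] [Nonempty ι] {f : ι → Zigzag U} (hf : Monotone f) {L : α}
    (hL : IsLUB (range fun s => (f s).p) L) (hp : ∀ s, (f s).p < L) (hq : ∀ s, (f s).q ≤ L) :
    ∃ F : U.obj L ⟶ U.obj L, ∀ s,
      U.map (homOfLE (hp s).le) ≫ F = (f s).F ≫ U.map (homOfLE (hq s)) := by
  have hlt_p : ∀ m < L, ∃ s, m < (f s).p := fun m hm => by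
    simpa using (lt_isLUB_iff hL).1 hm
  have hlim : IsLimitElem L := by
    refine ⟨⟨_, hp (Classical.arbitrary ι)⟩, fun m hm => ?_⟩
    obtain ⟨s, hs⟩ := hlt_p m hm
    exact ⟨_, hs, hp s⟩
  have mono : ∀ m s s' (hs : m ≤ (f s).p) (hs' : m ≤ (f s').p), s ≤ s' →
      U.map (homOfLE hs) ≫ (f s).F ≫ U.map (homOfLE (hq s)) =
        U.map (homOfLE hs') ≫ (f s').F ≫ U.map (homOfLE (hq s')) := by
    intro m s s' hs hs' hss'
    rw [← map_homOfLE_comp_map_homOfLE U (q_strictMono.monotone (hf hss')) (hq s'),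
      ← reassoc_of% (map_F_of_le (hf hss')), map_homOfLE_comp_map_homOfLE_assoc]
  have indep : ∀ m s s' (hs : m ≤ (f s).p) (hs' : m ≤ (f s').p),
      U.map (homOfLE hs) ≫ (f s).F ≫ U.map (homOfLE (hq s)) =
        U.map (homOfLE hs') ≫ (f s').F ≫ U.map (homOfLE (hq s')) :=
    fun m s s' hs hs' => (le_total s s').elim (mono m s s' hs hs')
      fun h => (mono m s' s hs' hs h).symm
  choose sel hsel using hlt_p
  obtain ⟨F, hF⟩ := hcont.exists_desc hlim
    (fun m hm => U.map (homOfLE (hsel m hm).le) ≫ (f (sel m hm)).F ≫ U.map (homOfLE (hq _)))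
    (fun m m' h hm' => by rw [map_homOfLE_comp_map_homOfLE_assoc]; apply indep)
  exact ⟨F, fun s => (hF _ (hp s)).trans (by simpa using indep _ _ s _ le_rfl)⟩

section Construction

variable [NoMaxOrder α]

lemma exists_gt (hU : IsFraisseSeq U) (x : Zigzag U) : ∃ y, x < y := by
  obtain ⟨l, _, hrl, F, hF⟩ := hU.exists_comp_eq_map x.G x.r
  obtain ⟨r, _, hlr, G, hG⟩ := hU.exists_comp_eq_map F l
  exact ⟨⟨x.r, l, r, hrl.le, hlr, F, G, hG⟩, le_rfl, by simpa using hF⟩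

lemma exists_forall_lt_of_isLUB (hU : IsFraisseSeq U) (hcont : ContinuousChain U)
    {ι : Type*} [LinearOrder ι] [Nonempty ι] [NoMaxOrder ι] {f : ι → Zigzag U}
    (hf : StrictMono f) {L : α} (hL : IsLUB (range fun s => (f s).p) L) :
    ∃ y, ∀ s, f s < y := by
  have hr : ∀ s, (f s).r ≤ L := fun s =>
    let ⟨_, hs⟩ := NoMaxOrder.exists_gt s
    (r_le_p_of_lt (hf hs)).trans (hL.1 ⟨_, rfl⟩)
  obtain ⟨F, hF⟩ := exists_map_comp_eq_F_comp_map_of_isLUB hcont hf.monotone hL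
    (fun s => ((f s).p_le_q.trans_lt (f s).q_lt_r).trans_le (hr s))
    (fun s => (f s).q_lt_r.le.trans (hr s))
  obtain ⟨r, _, hLr, G, hG⟩ := hU.exists_comp_eq_map F L
  refine ⟨⟨L, L, r, le_rfl, hLr, F, G, hG⟩, fun s => ⟨hr s, ?_⟩⟩
  obtain ⟨s', hs'⟩ := NoMaxOrder.exists_gt s
  have hlt := hf hs'
  dsimp only
  rw [← map_homOfLE_comp_map_homOfLE_assoc U (r_le_p_of_lt hlt) (hL.1 ⟨s', rfl⟩), hF,
    reassoc_of% hlt.2, map_homOfLE_comp_map_homOfLE]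

variable [WellFoundedLT α]

lemma exists_gt_and_forall_lt (hU : IsFraisseSeq U) (hcont : ContinuousChain U)
    (hbdd : ∀ t : α, ∀ f : Iio t → α, BddAbove (range f)) {x₀ : Zigzag U} {t : α}
    {f : Iio t → Zigzag U} (hf : StrictMono f) (hx₀ : ∀ s, x₀ < f s) :
    ∃ y, x₀ < y ∧ ∀ s, f s < y := by
  by_cases htop : ∃ s₀ : Iio t, IsTop s₀
  · obtain ⟨s₀, hs₀⟩ := htop
    obtain ⟨y, hy⟩ := exists_gt hU (f s₀)
    exact ⟨y, (hx₀ s₀).trans hy, fun s => (hf.monotone (hs₀ s)).trans_lt hy⟩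
  rcases isEmpty_or_nonempty (Iio t) with _ | _
  · obtain ⟨y, hy⟩ := exists_gt hU x₀
    exact ⟨y, hy, isEmptyElim⟩
  have : NoMaxOrder (Iio t) :=
    ⟨fun s => (isTop_or_exists_gt s).resolve_left fun h => htop ⟨s, h⟩⟩
  have hb := hbdd t fun s => (f s).p
  obtain ⟨y, hy⟩ := exists_forall_lt_of_isLUB hU hcont hf (L := wellFounded_lt.min _ hb)
    ⟨wellFounded_lt.min_mem _ hb, fun _ hx => wellFounded_lt.min_le hx⟩
  exact ⟨y, (hx₀ _).trans (hy (Classical.arbitrary _)), hy⟩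

theorem exists_strictMono (hU : IsFraisseSeq U) (hcont : ContinuousChain U)
    (hbdd : ∀ t : α, ∀ f : Iio t → α, BddAbove (range f)) (x₀ : Zigzag U) :
    ∃ g : α → Zigzag U, StrictMono g ∧ ∀ t, x₀ < g t := by
  -- Recursing in `Ioi x₀` keeps the initial zigzag below every stage.
  obtain ⟨g, hg⟩ := exists_strictMono_of_forall_exists_gt (β := Ioi x₀) fun t f hf =>
    let ⟨y, hy, hfy⟩ := exists_gt_and_forall_lt hU hcont hbdd
      ((Subtype.strictMono_coe _).comp hf) fun s => (f s).2
    ⟨⟨y, hy⟩, hfy⟩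
  exact ⟨fun t => g t, (Subtype.strictMono_coe _).comp hg, fun t => (g t).2⟩

end Construction

theorem exists_iso_of_strictMono [WellFoundedLT α] (i : C ⥤ D) {c : Cocone (U ⋙ i)}
    (hc : IsColimit c) {g : α → Zigzag U} (hg : StrictMono g) {x₀ : Zigzag U}
    (hx₀ : ∀ t, x₀ < g t) :
    ∃ k : c.pt ≅ c.pt, c.ι.app x₀.p ≫ k.hom = i.map x₀.F ≫ c.ι.app x₀.q := by
  have hp : ∀ t, t ≤ (g t).p := fun t => (p_strictMono.comp hg).le_apply
  have hq : ∀ t, t ≤ (g t).q := fun t => (hp t).trans (g t).p_le_q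
  obtain ⟨k, hk⟩ := exists_endo_of_natural hc (a := fun s => (g s).p) (b := fun s => (g s).q)
    (p_strictMono.comp hg).monotone (q_strictMono.comp hg).monotone hp
    (fun s => i.map (g s).F) fun s s' h => by
      simp only [Functor.comp_map, ← i.map_comp, map_F_of_le (hg.monotone h)]
  obtain ⟨k', hk'⟩ := exists_endo_of_natural hc (a := fun s => (g s).q) (b := fun s => (g s).r)
    (q_strictMono.comp hg).monotone (r_strictMono.comp hg).monotone hq
    (fun s => i.map (g s).G) fun s s' h => by
      simp only [Functor.comp_map, ← i.map_comp, map_G_of_le (hg.monotone h)]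
  have hkk' : k ≫ k' = 𝟙 _ := hc.hom_ext fun m => by
    have hk'q : c.ι.app (g m).q ≫ k' = i.map (g m).G ≫ c.ι.app (g m).r := by
      simpa using hk' m _ le_rfl
    rw [reassoc_of% (hk m m (hp m)), hk'q, ← i.map_comp_assoc, ← i.map_comp_assoc,
      Category.assoc, F_comp_G,
      map_homOfLE_comp_map_homOfLE, Category.comp_id]
    exact c.w (homOfLE _)
  have hk'k : k' ≫ k = 𝟙 _ := hc.hom_ext fun m => by
    have hlt : g m < g (g m).r := hg ((hq m).trans_lt (g m).q_lt_r)
    rw [reassoc_of% (hk' m m (hq m)), hk _ _ (hp (g m).r)]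
    simp only [Functor.comp_map]
    rw [← i.map_comp_assoc, ← i.map_comp_assoc, ← i.map_comp_assoc]
    simp only [Category.assoc]
    rw [hlt.2, map_homOfLE_comp_map_homOfLE, Category.comp_id]
    exact c.w (homOfLE _)
  refine ⟨⟨k, k', hkk', hk'k⟩, ?_⟩
  change c.ι.app x₀.p ≫ k = _
  rw [hk x₀.p x₀.p (p_strictMono (hx₀ x₀.p)).le, Functor.comp_map, ← i.map_comp_assoc,
    map_F_of_le (hx₀ x₀.p).le, i.map_comp_assoc]
  exact congrArg _ (c.w (homOfLE _))

end Zigzag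

end Zigzags

theorem IsFraisseSeq.exists_iso_extending {α : Type w} [LinearOrder α] [WellFoundedLT α]
    [NoMaxOrder α] {U : α ⥤ C} (hU : IsFraisseSeq U) (hcont : ContinuousChain U)
    (hbdd : ∀ t : α, ∀ f : Iio t → α, BddAbove (range f)) (i : C ⥤ D) {c : Cocone (U ⋙ i)}
    (hc : IsColimit c) {p q : α} (F : U.obj p ⟶ U.obj q) :
    ∃ k : c.pt ≅ c.pt, c.ι.app p ≫ k.hom = i.map F ≫ c.ι.app q := by
  obtain ⟨r, _, hr, G, hG⟩ :=
    hU.exists_comp_eq_map (F ≫ U.map (homOfLE (le_max_right p q))) (max p q)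
  let x₀ : Zigzag U := ⟨p, max p q, r, le_max_left p q, hr, _, G, hG⟩
  obtain ⟨g, hg, hx₀⟩ := Zigzag.exists_strictMono hU hcont hbdd x₀
  obtain ⟨k, hk⟩ := Zigzag.exists_iso_of_strictMono i hc hg hx₀
  refine ⟨k, hk.trans ?_⟩
  simp [x₀]

theorem statement_5_general {C : Type u₁} [Category.{v₁} C] {D : Type u₂} [Category.{v₂} D]
    (κ : Cardinal.{w}) (hκ : κ.IsRegular) (hAP : AP C)
    (i : C ⥤ D) (hfull : i.Full)
    (hsmall : ∀ a : C, KappaSmall κ i a)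
    (U : κ.ord.ToType ⥤ C) (hU : IsFraisseSeq U) (hcont : ContinuousChain U)
    (c : Cocone (U ⋙ i)) (hc : IsColimit c) :
    IsUltrahomog i c.pt := by
  have := Cardinal.noMaxOrder hκ.aleph0_le
  intro a b j χ₁ χ₂
  have : PreservesColimitsOfShape κ.ord.ToType (coyoneda.obj (op (i.obj a))) := hsmall a
  have : PreservesColimitsOfShape κ.ord.ToType (coyoneda.obj (op (i.obj b))) := hsmall b
  obtain ⟨m, f, rfl⟩ := exists_map_comp_ι_eq i hc χ₁
  obtain ⟨n, g, rfl⟩ := exists_map_comp_ι_eq i hc χ₂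
  obtain ⟨d, f', g', hfg⟩ := hAP f (j ≫ g)
  obtain ⟨l, hnl, h, hh⟩ := hU.2 n d g'
  obtain ⟨k, hk⟩ := hU.exists_iso_extending hcont (fun _ => hκ.bddAbove_range) i hc (f' ≫ h)
  refine ⟨k, ?_⟩
  calc (i.map f ≫ c.ι.app m) ≫ k.hom = i.map (f ≫ f' ≫ h) ≫ c.ι.app l := by simp [hk]
    _ = i.map (j ≫ g ≫ U.map (homOfLE hnl)) ≫ c.ι.app l := by rw [reassoc_of% hfg, hh]
    _ = i.map j ≫ i.map g ≫ c.ι.app n := by simp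

/-- Let `κ` be an infinite regular cardinal, `C` a category satisfying
the amalgamation property, and `i : C ⥤ D` a fully faithful embedding such that every
object of `C` is `κ`-small in `D`.  If `U` is a continuous `κ`-Fraïssé sequence in `C` and
`u` is a colimit in `D` of the image of `U` under `i`, then `u` is `C`-ultrahomogeneous. -/
theorem statement_5 {C : Type u₁} [Category.{v₁} C] {D : Type u₂} [Category.{v₂} D]
    (κ : Cardinal.{w}) (hκ : κ.IsRegular) (hAP : AP C)
    (i : C ⥤ D) (hfull : i.Full) (hfaith : i.Faithful)
    (hsmall : ∀ a : C, KappaSmall κ i a)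
    (U : κ.ord.ToType ⥤ C) (hU : IsFraisseSeq U) (hcont : ContinuousChain U)
    (c : Cocone (U ⋙ i)) (hc : IsColimit c) :
    IsUltrahomog i c.pt :=
  statement_5_general κ hκ hAP i hfull hsmall U hU hcont c hc

end Fraisse
end

section
/- Let κ be an infinite regular cardinal and i : C → D a fully faithful embedding. Let ū and v̄ be continuous κ-Fraïssé sequences in C, with colimits u and v in D (with colimit cocone morphisms j_m : i(u_m) → u and j'_m : i(v_m) → v), and let f : u_k → v_l be a morphism of C between an element of ū and an element of v̄. Then there exists an isomorphism F : u → v in D such that F ∘ j_k = j'_l ∘ i(f). -/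
open CategoryTheory CategoryTheory.Limits Opposite

universe w v₁ u₁ v₂ u₂

namespace Fraisse

variable {C : Type u₁} [Category.{v₁} C] {D : Type u₂} [Category.{v₂} D]

/-!
The isomorphism is built by a back-and-forth of length `κ`. By transfinite recursion one
constructs `f_α : u_{t_α} ⟶ v_{e_α}` and `g_α : v_{e_α} ⟶ u_{x_α}` such that `f_α ≫ g_α` and
`g_α ≫ u(x_α ≤ t_β) ≫ f_β` (for `α < β`) are transition maps, and every `f_α` extends `f`.
At successor steps `f_α` comes from the Fraïssé property of `v̄` applied to the previous `g`;
each `g_α` comes from the Fraïssé property of `ū`. At a limit step `t_α` is the supremum of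
the earlier `t_β`, which stays below `κ` by regularity, and `f_α` is induced by the earlier
`f_β` because `ū` is continuous at `t_α`. The indices `t_α` and `e_α` are cofinal, so the
`f_α` and `g_α` are mutually inverse natural transformations between cofinal subchains of `ū`
and `v̄`, and they induce inverse isomorphisms between the colimits.
-/

theorem _root_.Cardinal.IsRegular.exists_forall_lt_of_Iio {κ : Cardinal.{w}} (hκ : κ.IsRegular)
    (a : κ.ord.ToType) (G : Set.Iio a → κ.ord.ToType) : ∃ b, ∀ c, G c < b := by
  by_contra! h
  have hcof : Order.cof κ.ord.ToType ≤ Cardinal.mk (Set.range G) :=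
    Order.cof_le fun b => let ⟨c, hc⟩ := h b; ⟨G c, ⟨c, rfl⟩, hc⟩
  rw [Ordinal.cof_toType, hκ.cof_ord] at hcof
  exact (hcof.trans Cardinal.mk_range_le).not_gt (by simpa using Cardinal.mk_Iio_lt a)

section WellOrder

variable {J : Type*} [LinearOrder J] [WellFoundedLT J]

theorem exists_rel_chain_of_extend {X : Type*} (Q : X → Prop) (R : X → X → Prop)
    (h : ∀ (a : J) (c : Set.Iio a → X), (∀ b, Q (c b)) → (∀ ⦃b b'⦄, b < b' → R (c b) (c b')) →
      ∃ x, Q x ∧ ∀ b, R (c b) x) :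
    ∃ S : J → X, (∀ a, Q (S a)) ∧ ∀ ⦃a b⦄, a < b → R (S a) (S b) := by
  classical
  rcases isEmpty_or_nonempty J with hJ | ⟨⟨a₀⟩⟩
  · exact ⟨isEmptyElim, isEmptyElim, fun a => isEmptyElim a⟩
  have : Nonempty X := by
    obtain ⟨m, -, hm⟩ := wellFounded_lt.has_min Set.univ ⟨a₀, trivial⟩
    have : IsEmpty (Set.Iio m) := ⟨fun b => hm b trivial b.2⟩
    obtain ⟨x, -⟩ := h m isEmptyElim isEmptyElim fun b => isEmptyElim b
    exact ⟨x⟩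
  let S : J → X := wellFounded_lt.fix fun a prev =>
    if hc : (∀ b : Set.Iio a, Q (prev b b.2)) ∧
        ∀ ⦃b b' : Set.Iio a⦄, b < b' → R (prev b b.2) (prev b' b'.2) then
      (h a (fun b => prev b b.2) hc.1 hc.2).choose
    else Classical.arbitrary X
  have key (a : J) : Q (S a) ∧ ∀ b < a, R (S b) (S a) := by
    induction a using WellFoundedLT.induction with
    | ind a ih =>
      have hc : (∀ b : Set.Iio a, Q (S b)) ∧ ∀ ⦃b b' : Set.Iio a⦄, b < b' → R (S b) (S b') :=
        ⟨fun b => (ih b b.2).1, fun b b' hbb' => (ih b' b'.2).2 b hbb'⟩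
      rw [show S a = _ from wellFounded_lt.fix_eq _ a, dif_pos hc]
      obtain ⟨hQ, hR⟩ := (h a _ hc.1 hc.2).choose_spec
      exact ⟨hQ, fun b hb => hR ⟨b, hb⟩⟩
  exact ⟨S, fun a => (key a).1, fun a b hab => (key b).2 a hab⟩

end WellOrder

theorem exists_isLimitElem_of_strictMono {J : Type w} [LinearOrder J] [WellFoundedLT J]
    {I : Type*} [LinearOrder I] [Nonempty I] [NoMaxOrder I] {t : I → J} (ht : StrictMono t)
    (hb : ∃ b, ∀ i, t i < b) :
    ∃ T, IsLimitElem T ∧ (∀ i, t i < T) ∧ ∀ m < T, ∃ i, m ≤ t i := by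
  obtain ⟨T, hT, hmin⟩ := wellFounded_lt.has_min {b | ∀ i, t i < b} hb
  have hcof : ∀ m < T, ∃ i, m ≤ t i := fun m hm => by
    by_contra! h
    exact hmin m h hm
  refine ⟨T, ⟨⟨t (Classical.arbitrary I), hT _⟩, fun m hm => ?_⟩, hT, hcof⟩
  obtain ⟨i, hi⟩ := hcof m hm
  obtain ⟨i', hi'⟩ := exists_gt i
  exact ⟨t i', hi.trans_lt (ht hi'), hT i'⟩

section Stages

variable {J : Type w} [Preorder J] {U V : J ⥤ C}

@[simp]
theorem map_homOfLE_self_s6 {K : Type*} [Preorder K] (W : K ⥤ C) {a : K} (h : a ≤ a) :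
    W.map (homOfLE h) = 𝟙 _ :=
  W.map_id a

@[simp]
theorem map_homOfLE_comp_s6 {K : Type*} [Preorder K] (W : K ⥤ C) {a b c : K} (h : a ≤ b)
    (h' : b ≤ c) : W.map (homOfLE h) ≫ W.map (homOfLE h') = W.map (homOfLE (h.trans h')) := by
  rw [← W.map_comp, homOfLE_comp]

@[simp]
theorem map_homOfLE_comp_assoc_s6 {K : Type*} [Preorder K] (W : K ⥤ C) {a b c : K} (h : a ≤ b)
    (h' : b ≤ c) {X : C} (φ : W.obj c ⟶ X) :
    W.map (homOfLE h) ≫ W.map (homOfLE h') ≫ φ = W.map (homOfLE (h.trans h')) ≫ φ := by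
  rw [← Category.assoc, map_homOfLE_comp_s6]

variable (U V) in
structure Forth where
  t : J
  e : J
  f : U.obj t ⟶ V.obj e

/-- `s ≤ s'` when `s'` extends `s` along the transition maps of the two chains. -/
instance : Preorder (Forth U V) where
  le s s' := ∃ (ht : s.t ≤ s'.t) (he : s.e ≤ s'.e),
    s.f ≫ V.map (homOfLE he) = U.map (homOfLE ht) ≫ s'.f
  le_refl s := ⟨le_rfl, le_rfl, by simp⟩
  le_trans s s' s'' := by
    rintro ⟨ht, he, h⟩ ⟨ht', he', h'⟩
    refine ⟨ht.trans ht', he.trans he', ?_⟩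
    rw [← map_homOfLE_comp_s6 V he he', reassoc_of% h, h', map_homOfLE_comp_assoc_s6]

variable (U V) in
structure Stage_s6 extends Forth U V where
  x : J
  g : V.obj e ⟶ U.obj x
  t_lt_x : t < x
  f_comp_g : f ≫ g = U.map (homOfLE t_lt_x.le)

def Stage_s6.Precedes (s : Stage_s6 U V) (s' : Forth U V) : Prop :=
  ∃ (hx : s.x ≤ s'.t) (he : s.e < s'.e),
    s.g ≫ U.map (homOfLE hx) ≫ s'.f = V.map (homOfLE he.le)

theorem Stage_s6.Precedes.le {s : Stage_s6 U V} {s' : Forth U V} (h : s.Precedes s') :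
    s.toForth ≤ s' := by
  obtain ⟨hx, he, h⟩ := h
  refine ⟨s.t_lt_x.le.trans hx, he.le, ?_⟩
  rw [← h, ← Category.assoc, s.f_comp_g, map_homOfLE_comp_assoc_s6]

theorem Stage_s6.Precedes.trans_le {s : Stage_s6 U V} {s' s'' : Forth U V} (h : s.Precedes s')
    (h' : s' ≤ s'') : s.Precedes s'' := by
  obtain ⟨hx, he, h⟩ := h
  obtain ⟨ht', he', h'⟩ := h'
  refine ⟨hx.trans ht', he.trans_le he', ?_⟩
  rw [← map_homOfLE_comp_s6 U hx ht', Category.assoc, ← h', reassoc_of% h, map_homOfLE_comp_s6]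

theorem Forth.ι_comp_eq_of_le (i : C ⥤ D) {s s' : Forth U V} (h : s ≤ s')
    {cu : Cocone (U ⋙ i)} {cv : Cocone (V ⋙ i)} {F : cu.pt ⟶ cv.pt}
    (hF : cu.ι.app s'.t ≫ F = i.map s'.f ≫ cv.ι.app s'.e) :
    cu.ι.app s.t ≫ F = i.map s.f ≫ cv.ι.app s.e := by
  obtain ⟨ht, he, h⟩ := h
  rw [← cu.w (homOfLE ht), Category.assoc, hF, ← cv.w (homOfLE he)]
  simp only [Functor.comp_map, ← i.map_comp_assoc, h]

def IsZigzag {I : Type*} [Preorder I] (S : I → Stage_s6 U V) : Prop :=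
  ∀ ⦃a b⦄, a < b → (S a).Precedes (S b).toForth

namespace IsZigzag

variable {I : Type*} [PartialOrder I] {S : I → Stage_s6 U V} (hS : IsZigzag S)
include hS

theorem monotone : Monotone fun a => (S a).toForth := fun _ _ hab =>
  hab.eq_or_lt.elim (fun h => h ▸ le_rfl) fun h => (hS h).le

theorem strictMono_t : StrictMono fun a => (S a).t := fun _ _ hab =>
  let ⟨hx, _⟩ := hS hab; (S _).t_lt_x.trans_le hx

theorem strictMono_e : StrictMono fun a => (S a).e := fun _ _ hab =>
  let ⟨_, he, _⟩ := hS hab; he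

theorem monotone_x : Monotone fun a => (S a).x := fun _ b hab =>
  hab.eq_or_lt.elim (fun h => h ▸ le_rfl) fun h =>
    let ⟨hx, _⟩ := hS h; hx.trans (S b).t_lt_x.le

theorem map_comp_g {a b : I} (hab : a ≤ b) :
    V.map (homOfLE (hS.strictMono_e.monotone hab)) ≫ (S b).g =
      (S a).g ≫ U.map (homOfLE (hS.monotone_x hab)) := by
  rcases hab.eq_or_lt with rfl | hlt
  · simp
  obtain ⟨hx, he, h⟩ := hS hlt
  rw [← h]
  simp only [Category.assoc, (S b).f_comp_g, map_homOfLE_comp_s6]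

def forth : hS.strictMono_t.monotone.functor ⋙ U ⟶ hS.strictMono_e.monotone.functor ⋙ V where
  app a := (S a).f
  naturality a b hab := by
    obtain ⟨_, _, h⟩ := hS.monotone (leOfHom hab)
    exact h.symm

def back : hS.strictMono_e.monotone.functor ⋙ V ⟶ hS.monotone_x.functor ⋙ U where
  app a := (S a).g
  naturality _ _ hab := hS.map_comp_g (leOfHom hab)

end IsZigzag

end Stages

section Extension

variable {J : Type w} [LinearOrder J] [NoMaxOrder J] {U V : J ⥤ C}

theorem Stage_s6.exists_precedes (hV : IsFraisseSeq V) (s : Stage_s6 U V) :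
    ∃ s' : Forth U V, s.Precedes s' := by
  obtain ⟨e₀, he₀, f₀, hf₀⟩ := hV.2 s.e (U.obj s.x) s.g
  obtain ⟨e', he'⟩ := exists_gt e₀
  refine ⟨⟨s.x, e', f₀ ≫ V.map (homOfLE he'.le)⟩, le_rfl, he₀.trans_lt he', ?_⟩
  dsimp only
  rw [map_homOfLE_self_s6, Category.id_comp, ← reassoc_of% hf₀, map_homOfLE_comp_s6]

theorem Forth.exists_stage (hU : IsFraisseSeq U) (s : Forth U V) :
    ∃ st : Stage_s6 U V, st.toForth = s := by
  obtain ⟨x₀, hx₀, g₀, hg₀⟩ := hU.2 s.t (V.obj s.e) s.f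
  obtain ⟨x, hx⟩ := exists_gt x₀
  refine ⟨⟨s, x, g₀ ≫ U.map (homOfLE hx.le), hx₀.trans_lt hx, ?_⟩, rfl⟩
  rw [← Category.assoc, ← hg₀, map_homOfLE_comp_s6]

end Extension

section BackAndForth

variable {J : Type w} [LinearOrder J] [WellFoundedLT J] {U V : J ⥤ C}

theorem exists_forth_upperBound (hUcont : ContinuousChain U) {I : Type*} [LinearOrder I]
    [Nonempty I] [NoMaxOrder I] {P : I → Forth U V} (hP : Monotone P)
    (ht : StrictMono fun i => (P i).t) (htb : ∃ b, ∀ i, (P i).t < b) {E : J}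
    (hE : ∀ i, (P i).e ≤ E) : ∃ s : Forth U V, ∀ i, P i ≤ s := by
  obtain ⟨T, hTlim, hT, hcof⟩ := exists_isLimitElem_of_strictMono ht htb
  obtain ⟨hcolim⟩ := hUcont T hTlim
  have ht' : Monotone fun i => (⟨(P i).t, hT i⟩ : {m // m < T}) := ht.monotone
  have : ht'.functor.Final := (Monotone.final_functor_iff ht').2 fun m => hcof m m.2
  let c : Cocone (ht'.functor ⋙ segIncl T ⋙ U) :=
    { pt := V.obj E
      ι :=
        { app := fun i => (P i).f ≫ V.map (homOfLE (hE i))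
          naturality := fun i j hij => by
            obtain ⟨ht, he, h⟩ := hP (leOfHom hij)
            change U.map (homOfLE ht) ≫ (P j).f ≫ V.map _ = ((P i).f ≫ V.map _) ≫ 𝟙 _
            rw [Category.comp_id, ← reassoc_of% h, map_homOfLE_comp_s6] } }
  let hcolim' := (Functor.Final.isColimitWhiskerEquiv ht'.functor _).symm hcolim
  exact ⟨⟨T, E, hcolim'.desc c⟩, fun i => ⟨(hT i).le, hE i, (hcolim'.fac c i).symm⟩⟩

variable [NoMaxOrder J]

theorem exists_stage_extending_zigzag (hU : IsFraisseSeq U) (hV : IsFraisseSeq V)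
    (hUcont : ContinuousChain U) (hbdd : ∀ (a : J) (G : Set.Iio a → J), ∃ b, ∀ c, G c < b)
    (seed : Forth U V) {a : J} (S : Set.Iio a → Stage_s6 U V) (hseed : ∀ b, seed ≤ (S b).toForth)
    (hS : IsZigzag S) : ∃ s : Stage_s6 U V, seed ≤ s.toForth ∧ ∀ b, (S b).Precedes s.toForth := by
  suffices ∃ s : Forth U V, seed ≤ s ∧ ∀ b, (S b).Precedes s by
    obtain ⟨s, hs, hSs⟩ := this
    obtain ⟨st, rfl⟩ := s.exists_stage hU
    exact ⟨st, hs, hSs⟩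
  rcases isEmpty_or_nonempty (Set.Iio a) with hempty | hne
  · exact ⟨seed, le_rfl, isEmptyElim⟩
  by_cases hmax : ∃ b : Set.Iio a, IsMax b
  · obtain ⟨b, hb⟩ := hmax
    obtain ⟨s, hs⟩ := (S b).exists_precedes hV
    refine ⟨s, (hseed b).trans hs.le, fun b' => ?_⟩
    rcases (hb.isTop b').eq_or_lt with rfl | h
    · exact hs
    · exact (hS h).trans_le hs.le
  · push Not at hmax
    have : NoMaxOrder (Set.Iio a) := ⟨fun b => not_isMax_iff.1 (hmax b)⟩
    obtain ⟨E, hE⟩ := hbdd a fun b => (S b).e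
    obtain ⟨s, hs⟩ := exists_forth_upperBound hUcont hS.monotone hS.strictMono_t
      (hbdd a _) fun b => (hE b).le
    refine ⟨s, (hseed hne.some).trans (hs hne.some), fun b => ?_⟩
    obtain ⟨b', hb'⟩ := exists_gt b
    exact (hS hb').trans_le (hs b')

theorem exists_isZigzag (hU : IsFraisseSeq U) (hV : IsFraisseSeq V)
    (hUcont : ContinuousChain U) (hbdd : ∀ (a : J) (G : Set.Iio a → J), ∃ b, ∀ c, G c < b)
    (seed : Forth U V) : ∃ S : J → Stage_s6 U V, IsZigzag S ∧ ∀ a, seed ≤ (S a).toForth := by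
  obtain ⟨S, hseed, hS⟩ := exists_rel_chain_of_extend (fun s : Stage_s6 U V => seed ≤ s.toForth)
    (fun s s' => s.Precedes s'.toForth) fun _ c hseed hc =>
      exists_stage_extending_zigzag hU hV hUcont hbdd seed c hseed hc
  exact ⟨S, hS, hseed⟩

theorem IsZigzag.exists_iso {S : J → Stage_s6 U V} (hS : IsZigzag S) (i : C ⥤ D)
    {cu : Cocone (U ⋙ i)} (hcu : IsColimit cu) {cv : Cocone (V ⋙ i)} (hcv : IsColimit cv) :
    ∃ F : cu.pt ≅ cv.pt, ∀ a, cu.ι.app (S a).t ≫ F.hom = i.map (S a).f ≫ cv.ι.app (S a).e := by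
  have : hS.strictMono_t.monotone.functor.Final :=
    (Monotone.final_functor_iff _).2 fun a => ⟨a, hS.strictMono_t.le_apply⟩
  have : hS.strictMono_e.monotone.functor.Final :=
    (Monotone.final_functor_iff _).2 fun a => ⟨a, hS.strictMono_e.le_apply⟩
  let hcu' := (Functor.Final.isColimitWhiskerEquiv hS.strictMono_t.monotone.functor cu).symm hcu
  let hcv' := (Functor.Final.isColimitWhiskerEquiv hS.strictMono_e.monotone.functor cv).symm hcv
  let F := hcu'.map (cv.whisker _) (Functor.whiskerRight hS.forth i)
  let G := hcv'.map (cu.whisker hS.monotone_x.functor) (Functor.whiskerRight hS.back i)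
  have hF : ∀ a, cu.ι.app (S a).t ≫ F = i.map (S a).f ≫ cv.ι.app (S a).e := hcu'.ι_map _ _
  have hG : ∀ a, cv.ι.app (S a).e ≫ G = i.map (S a).g ≫ cu.ι.app (S a).x := hcv'.ι_map _ _
  refine ⟨⟨F, G, hcu'.hom_ext fun a => ?_, hcv'.hom_ext fun a => ?_⟩, hF⟩
  · change cu.ι.app (S a).t ≫ F ≫ G = cu.ι.app (S a).t ≫ 𝟙 _
    rw [reassoc_of% hF a, hG, ← i.map_comp_assoc, (S a).f_comp_g, Category.comp_id]
    exact cu.w _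
  · obtain ⟨b, hab⟩ := exists_gt a
    obtain ⟨hx, _, h⟩ := hS hab
    change cv.ι.app (S a).e ≫ G ≫ F = cv.ι.app (S a).e ≫ 𝟙 _
    rw [reassoc_of% hG a, ← cu.w (homOfLE hx), Functor.comp_map, Category.assoc, hF,
      ← i.map_comp_assoc, ← i.map_comp_assoc, Category.assoc, h, Category.comp_id]
    exact cv.w _

end BackAndForth

theorem statement_6_general {C : Type u₁} [Category.{v₁} C] {D : Type u₂} [Category.{v₂} D]
    (κ : Cardinal.{w}) (hκ : κ.IsRegular)
    (i : C ⥤ D)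
    (U V : κ.ord.ToType ⥤ C)
    (hU : IsFraisseSeq U) (hUcont : ContinuousChain U)
    (hV : IsFraisseSeq V)
    (cu : Cocone (U ⋙ i)) (hcu : IsColimit cu)
    (cv : Cocone (V ⋙ i)) (hcv : IsColimit cv)
    (k l : κ.ord.ToType) (f : U.obj k ⟶ V.obj l) :
    ∃ F : cu.pt ≅ cv.pt, cu.ι.app k ≫ F.hom = i.map f ≫ cv.ι.app l := by
  have := Cardinal.noMaxOrder hκ.aleph0_le
  obtain ⟨S, hS, hseed⟩ :=
    exists_isZigzag hU hV hUcont hκ.exists_forall_lt_of_Iio ⟨k, l, f⟩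
  obtain ⟨F, hF⟩ := hS.exists_iso i hcu hcv
  exact ⟨F, Forth.ι_comp_eq_of_le i (hseed k) (hF k)⟩

/-- Let `κ` be an infinite regular cardinal and `i : C ⥤ D` a fully
faithful embedding.  Let `U` and `V` be continuous `κ`-Fraïssé sequences in `C` with
colimits `u` and `v` in `D` (with colimit cocone morphisms `j_m` and `j'_m`), and let
`f : U.obj k ⟶ V.obj l` be a morphism of `C` between elements of the sequences.  Then
there is an isomorphism `F : u ≅ v` with `F ∘ j_k = j'_l ∘ i(f)`. -/
theorem statement_6 {C : Type u₁} [Category.{v₁} C] {D : Type u₂} [Category.{v₂} D]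
    (κ : Cardinal.{w}) (hκ : κ.IsRegular)
    (i : C ⥤ D) (hfull : i.Full) (hfaith : i.Faithful)
    (U V : κ.ord.ToType ⥤ C)
    (hU : IsFraisseSeq U) (hUcont : ContinuousChain U)
    (hV : IsFraisseSeq V) (hVcont : ContinuousChain V)
    (cu : Cocone (U ⋙ i)) (hcu : IsColimit cu)
    (cv : Cocone (V ⋙ i)) (hcv : IsColimit cv)
    (k l : κ.ord.ToType) (f : U.obj k ⟶ V.obj l) :
    ∃ F : cu.pt ≅ cv.pt, cu.ι.app k ≫ F.hom = i.map f ≫ cv.ι.app l :=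
  statement_6_general κ hκ i U V hU hUcont hV cu hcu cv hcv k l f

end Fraisse
end

section
/- Let C be a small category satisfying the right Ore condition and J_at the atomic topology on C. Then the terminal object of Sh(C, J_at) has exactly two subobjects (the initial subobject and the identity, and these are distinct) — i.e., the atomic topos Sh(C, J_at) is connected — if and only if C is a connected category. -/
open CategoryTheory CategoryTheory.Limits

universe u

namespace Fraisse

/-- The right Ore condition: every cospan can be completed to a commutative square. -/
def RightOre (C : Type u) [SmallCategory C] : Prop :=
  ∀ ⦃a b c : C⦄ (f : b ⟶ a) (g : c ⟶ a),
    ∃ (d : C) (f' : d ⟶ c) (g' : d ⟶ b), f' ≫ g = g' ≫ f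

/-- The atomic topology on a category satisfying the right Ore condition: a sieve is
covering if and only if it is nonempty. -/
def atomicTopology (C : Type u) [SmallCategory C] (h : RightOre C) :
    GrothendieckTopology C where
  sieves X S := ∃ (Y : C) (f : Y ⟶ X), S.arrows f
  top_mem' X := ⟨X, 𝟙 X, trivial⟩
  pullback_stable' X Y S f hS := by
    obtain ⟨Z, g, hg⟩ := hS
    obtain ⟨d, f', g', hcomm⟩ := h g f
    exact ⟨d, f', by
      show S.arrows (f' ≫ f)
      rw [hcomm]
      exact S.downward_closed hg g'⟩
  transitive' X S hS R hR := by
    obtain ⟨Z, g, hg⟩ := hS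
    obtain ⟨W, k, hk⟩ := hR hg
    exact ⟨W, k ≫ g, hk⟩

attribute [local instance high] Sheaf.instHasColimitsOfShape

/-!
For the atomic topology, a subterminal sheaf is determined by its support, the set of objects
over which it has a (necessarily unique) section. The support is closed under morphisms in both
directions: downwards by restriction, upwards because every nonempty sieve covers and sections
of a subsingleton-valued sheaf always glue. Conversely every such set is the support of a
subterminal sheaf. These sets are the unions of connected components of `C`, and a subterminal
sheaf is `⊥` or `⊤` exactly when its support is empty or everything; so the terminal sheaf has
only the two trivial subobjects iff `C` has no nontrivial union of components, and `⊥ ≠ ⊤`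
iff `C` is nonempty.
-/

open Opposite

section SheavesOfTypes

variable {C : Type u} [SmallCategory C] {J : GrothendieckTopology C}

lemma Sheaf.isIso_iff_bijective_app {F G : Sheaf J (Type u)} (f : F ⟶ G) :
    IsIso f ↔ ∀ X, Function.Bijective (f.hom.app X) := by
  rw [← isIso_iff_of_reflects_iso _ (sheafToPresheaf _ _), NatTrans.isIso_iff_isIso_app]
  exact forall_congr' fun X => isIso_iff_bijective _

lemma Sheaf.mono_of_subsingleton_obj {F G : Sheaf J (Type u)} (f : F ⟶ G)
    (hF : ∀ X, Subsingleton (F.obj.obj X)) : Mono f := by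
  have : ∀ X, Mono (f.hom.app X) := fun X =>
    (mono_iff_injective _).2 fun _ _ _ => Subsingleton.elim _ _
  have : Mono f.hom := NatTrans.mono_of_mono_app _
  exact Sheaf.Hom.mono_of_presheaf_mono _ _ f

lemma Sheaf.subsingleton_obj_of_mono {F G : Sheaf J (Type u)} (f : F ⟶ G) [Mono f] (X : Cᵒᵖ)
    [Subsingleton (G.obj.obj X)] : Subsingleton (F.obj.obj X) :=
  ((mono_iff_injective (f.hom.app X)).1 inferInstance).subsingleton

noncomputable instance Sheaf.uniqueTerminalObj (X : Cᵒᵖ) :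
    Unique ((⊤_ Sheaf J (Type u)).obj.obj X) :=
  Types.isTerminalEquivUnique _
    (terminalIsTerminal.isTerminalObj (sheafToPresheaf J _ ⋙ (evaluation _ _).obj X) _)

lemma Subobject.mk_eq_top_iff_nonempty {F : Sheaf J (Type u)} (f : F ⟶ ⊤_ Sheaf J (Type u))
    [Mono f] : Subobject.mk f = ⊤ ↔ ∀ X, Nonempty (F.obj.obj X) := by
  rw [← Subobject.isIso_iff_mk_eq_top, Sheaf.isIso_iff_bijective_app]
  refine forall_congr' fun X => ⟨fun hf => ⟨hf.2 default |>.choose⟩, fun ⟨x⟩ => ?_⟩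
  exact ⟨(mono_iff_injective _).1 inferInstance, fun y => ⟨x, Subsingleton.elim _ _⟩⟩

lemma Subobject.mk_eq_bot_of_isEmpty {F B : Sheaf J (Type u)} (f : F ⟶ B) [Mono f]
    (hF : ∀ X, IsEmpty (F.obj.obj X)) : Subobject.mk f = ⊥ := by
  let toInitial : F ⟶ ⊥_ Sheaf J (Type u) := ObjectProperty.homMk
    { app := fun X => TypeCat.ofHom fun x => (hF X).elim x
      naturality := fun X _ _ => by ext x; exact (hF X).elim x }
  refine le_bot_iff.1 ?_
  rw [Subobject.bot_eq_initial_to]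
  exact Subobject.mk_le_mk_of_comm toInitial (Sheaf.hom_ext (by ext X x; exact (hF X).elim x))

end SheavesOfTypes

section Atomic

variable {C : Type u} [SmallCategory C] (h : RightOre C)

def IsMorphismClosed (S : Set C) : Prop := ∀ ⦃X Y : C⦄, (X ⟶ Y) → (X ∈ S ↔ Y ∈ S)

def indicatorSheaf {S : Set C} (hS : IsMorphismClosed S) : Sheaf (atomicTopology C h) (Type u) where
  obj :=
    { obj := fun X => ULift.{u} (PLift (X.unop ∈ S))
      map := fun f => TypeCat.ofHom fun x => ⟨⟨(hS f.unop).2 x.down.down⟩⟩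
      map_id := fun X => by ext x; rfl
      map_comp := fun f g => by ext x; rfl }
  property := by
    rw [isSheaf_iff_isSheaf_of_type]
    rintro X R ⟨Y, g, hg⟩ x -
    exact ⟨⟨⟨(hS g).1 (x g hg).down.down⟩⟩, fun _ _ _ => rfl, fun _ _ => rfl⟩

instance {S : Set C} (hS : IsMorphismClosed S) (X : Cᵒᵖ) :
    Subsingleton ((indicatorSheaf h hS).obj.obj X) :=
  inferInstanceAs (Subsingleton (ULift (PLift _)))

lemma isEmpty_initial_obj (X : Cᵒᵖ) :
    IsEmpty ((⊥_ Sheaf (atomicTopology C h) (Type u)).obj.obj X) :=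
  -- the empty presheaf is a sheaf, as the empty sieve does not cover
  let empty := indicatorSheaf h (S := ∅) fun _ _ _ => Iff.rfl
  ⟨fun x => ((initial.to empty).hom.app X x).down.down⟩

lemma isMorphismClosed_setOf_nonempty {F : Sheaf (atomicTopology C h) (Type u)}
    (hF : ∀ X, Subsingleton (F.obj.obj X)) :
    IsMorphismClosed {X : C | Nonempty (F.obj.obj (op X))} := by
  intro Y X g
  refine ⟨fun hY => ?_, fun ⟨x⟩ => ⟨F.obj.map g.op x⟩⟩
  -- the sieve of arrows whose domain carries a section contains `g`, hence covers `X`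
  let R : Sieve X :=
    { arrows := fun Z _ => Nonempty (F.obj.obj (op Z))
      downward_closed := fun ⟨s⟩ k => ⟨F.obj.map k.op s⟩ }
  have hR : R ∈ atomicTopology C h X := ⟨Y, g, hY⟩
  exact ⟨((isSheaf_iff_isSheaf_of_type _ _).1 F.property R hR).amalgamate
    (fun _ _ hf => Classical.choice hf) fun _ _ _ _ _ _ _ _ _ _ => Subsingleton.elim _ _⟩

lemma Subobject.mk_eq_bot_iff_isEmpty {F B : Sheaf (atomicTopology C h) (Type u)} (f : F ⟶ B)
    [Mono f] : Subobject.mk f = ⊥ ↔ ∀ X, IsEmpty (F.obj.obj X) := by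
  refine ⟨fun hf X => ?_, Subobject.mk_eq_bot_of_isEmpty f⟩
  rw [Subobject.bot_eq_initial_to] at hf
  exact ⟨fun x => (isEmpty_initial_obj h X).elim ((Subobject.ofMkLEMk _ _ hf.le).hom.app X x)⟩

lemma subobject_terminal_eq_bot_or_eq_top [IsPreconnected C]
    (s : Subobject (⊤_ Sheaf (atomicTopology C h) (Type u))) : s = ⊥ ∨ s = ⊤ := by
  refine Subobject.ind (fun s => s = ⊥ ∨ s = ⊤) (fun F f _ => ?_) s
  have hF : ∀ X, Subsingleton (F.obj.obj X) := fun X => Sheaf.subsingleton_obj_of_mono f X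
  by_cases hS : ∃ j₀ : C, Nonempty (F.obj.obj (op j₀))
  · obtain ⟨j₀, hj₀⟩ := hS
    refine .inr <| (Subobject.mk_eq_top_iff_nonempty f).2 fun X => ?_
    exact induct_on_objects {j | Nonempty (F.obj.obj (op j))} hj₀
      (fun g => isMorphismClosed_setOf_nonempty h hF g) X.unop
  · exact .inl <| Subobject.mk_eq_bot_of_isEmpty f fun X =>
      not_nonempty_iff.1 fun hX => hS ⟨X.unop, hX⟩

end Atomic

/-- Let `C` be a small category satisfying the right Ore condition and
`J_at` the atomic topology on `C`.  Then the terminal object of `Sh(C, J_at)` has exactly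
two subobjects (the initial one and the identity, which are distinct) — i.e. the atomic
topos `Sh(C, J_at)` is connected — if and only if `C` is a connected category. -/
theorem statement_15 {C : Type u} [SmallCategory C] (h : RightOre C) :
    ((∀ s : Subobject (⊤_ (Sheaf (atomicTopology C h) (Type u))), s = ⊥ ∨ s = ⊤) ∧
      (⊥ : Subobject (⊤_ (Sheaf (atomicTopology C h) (Type u)))) ≠ ⊤) ↔
    IsConnected C := by
  constructor
  · rintro ⟨hsub, hbot⟩
    rw [Subobject.bot_eq_initial_to, Ne, Subobject.mk_eq_top_iff_nonempty] at hbot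
    obtain ⟨j₀⟩ : Nonempty C := by
      by_contra hC
      exact hbot fun X => (hC ⟨X.unop⟩).elim
    refine IsConnected.of_induct (j₀ := j₀) fun p hj₀ hp j => ?_
    have hS : IsMorphismClosed p := fun _ _ g => hp g
    let ι := terminal.from (indicatorSheaf h hS)
    have : Mono ι := Sheaf.mono_of_subsingleton_obj _ inferInstance
    rcases hsub (Subobject.mk ι) with hι | hι
    · exact ((Subobject.mk_eq_bot_iff_isEmpty h ι).1 hι (op j₀)).elim ⟨⟨hj₀⟩⟩
    · exact ((Subobject.mk_eq_top_iff_nonempty ι).1 hι (op j)).some.down.down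
  · intro hC
    refine ⟨subobject_terminal_eq_bot_or_eq_top h, fun hbot => ?_⟩
    rw [Subobject.bot_eq_initial_to, Subobject.mk_eq_top_iff_nonempty] at hbot
    obtain ⟨x⟩ := hbot (op (Classical.arbitrary C))
    exact (isEmpty_initial_obj h _).elim x

end Fraisse
end

section
/- Let i : C → D be a fully faithful embedding, u an object of D, and for every object c of C let a morphism f_c : i(c) → u be chosen, with each f_c a monomorphism in D. If u is C-ultrahomogeneous and satisfies the Galois property with respect to C̃, then the functor F : S(Aut(u)) → C^op, defined on objects by sending (the object corresponding to) f : i(a) → u to a, and sending a morphism from f to g represented by a coset χ(g)·α (where χ(f) ⊆ α⁻¹·χ(g)·α) to the unique morphism z : dom(g) → dom(f) in C with f ∘ i(z) = α⁻¹ ∘ g, is well defined and is an equivalence of categories; in particular S(Aut(u)) is equivalent to C^op. -/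
open CategoryTheory Opposite

universe v₁ u₁ v₂ u₂

namespace Fraisse

variable {C : Type u₁} [Category.{v₁} C] {D : Type u₂} [Category.{v₂} D]

variable (i : C ⥤ D) (u : D) (f : ∀ c : C, i.obj c ⟶ u)

/-- An object of the category `C̃`: an object `a` of `C` together with a morphism
`i(a) ⟶ u` of the form `α ∘ f_a` for some automorphism `α` of `u`. -/
structure TildeObj where
  left : C
  hom : i.obj left ⟶ u
  compat : ∃ α : Aut u, hom = f left ≫ α.hom

/-- The category `C̃`, a full subcategory of the comma category `(i ↓ u)`. -/
instance tildeCategory : Category (TildeObj i u f) where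
  Hom x y := { m : x.left ⟶ y.left // i.map m ≫ y.hom = x.hom }
  id x := ⟨𝟙 x.left, by simp⟩
  comp m n := ⟨m.1 ≫ n.1, by rw [Functor.map_comp, Category.assoc, n.2, m.2]⟩
  id_comp m := Subtype.ext (Category.id_comp m.1)
  comp_id m := Subtype.ext (Category.comp_id m.1)
  assoc m n p := Subtype.ext (Category.assoc m.1 n.1 p.1)

variable {i u f} in
/-- The stabilizer subgroup `Aut_g(u) ≤ Aut(u)` of an object `g` of `C̃`. -/
def stab (x : TildeObj i u f) : Subgroup (Aut u) where
  carrier := { α : Aut u | x.hom ≫ α.hom = x.hom }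
  one_mem' := by
    show x.hom ≫ (Iso.refl u).hom = x.hom
    simp
  mul_mem' := by
    intro a b ha hb
    show x.hom ≫ (a * b).hom = x.hom
    show x.hom ≫ (b.hom ≫ a.hom) = x.hom
    rw [← Category.assoc]
    rw [show x.hom ≫ b.hom = x.hom from hb, show x.hom ≫ a.hom = x.hom from ha]
  inv_mem' := by
    intro a ha
    show x.hom ≫ (a⁻¹).hom = x.hom
    show x.hom ≫ a.inv = x.hom
    conv_lhs => rw [← show x.hom ≫ a.hom = x.hom from ha]
    rw [Category.assoc]
    exact (congrArg (x.hom ≫ ·) (Iso.hom_inv_id (a : u ≅ u))).trans (Category.comp_id _)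

/-- The functor `χ : C̃^op ⥤ Subgr(Aut(u))` sending an object of `C̃` to its stabilizer. -/
def chi : (TildeObj i u f)ᵒᵖ ⥤ Subgroup (Aut u) where
  obj x := stab x.unop
  map {X Y} m := homOfLE (by
    intro α hα
    show Y.unop.hom ≫ α.hom = Y.unop.hom
    rw [← m.unop.2, Category.assoc,
      show X.unop.hom ≫ α.hom = X.unop.hom from hα])

/-- The Galois property: `χ` is full and faithful and reflects identities (in particular
it is injective on objects). -/
def GaloisProp : Prop :=
  (chi i u f).Full ∧ (chi i u f).Faithful ∧ Function.Injective (chi i u f).obj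

variable {i u f} in
/-- The condition for `α` to represent a morphism `f → g` of `S(Aut(u))`:
`χ(f) ⊆ α⁻¹·χ(g)·α`. -/
def SCond (x y : TildeObj i u f) (α : Aut u) : Prop :=
  ∀ β ∈ stab x, α * β * α⁻¹ ∈ stab y

variable {i u f} in
/-- Representatives of morphisms `x ⟶ y` of `S(Aut(u))` are identified when they define
the same right coset of `χ(y)`. -/
def sSetoid (x y : TildeObj i u f) : Setoid { α : Aut u // SCond x y α } where
  r a b := a.1 * b.1⁻¹ ∈ stab y
  iseqv := by
    constructor
    · intro a; rw [mul_inv_cancel]; exact one_mem _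
    · intro a b h
      have := inv_mem h
      rwa [mul_inv_rev, inv_inv] at this
    · intro a b c hab hbc
      have := mul_mem hab hbc
      rwa [mul_assoc, ← mul_assoc b.1⁻¹, inv_mul_cancel, one_mul] at this

/-- Objects of the category `S(Aut(u))`. -/
structure SObj where
  /-- The underlying object of `C̃`, thought of as the coset space `Aut(u)/χ(f)`. -/
  obj : TildeObj i u f

variable {i u f} in
/-- Morphisms of `S(Aut(u))`: right cosets `χ(y)·α` with `χ(x) ⊆ α⁻¹·χ(y)·α`. -/
def SHom (x y : SObj i u f) : Type v₂ :=
  Quotient (sSetoid x.obj y.obj)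

variable {i u f} in
/-- The morphism of `S(Aut(u))` determined by a representative `α`. -/
def mkSHom (x y : SObj i u f) (α : Aut u) (hα : SCond x.obj y.obj α) : SHom x y :=
  Quotient.mk _ ⟨α, hα⟩

/-- The category `S(Aut(u))` of the right coset spaces `Aut(u)/χ(f)`, with composition
induced by multiplication in `Aut(u)`. -/
instance sCategory : Category (SObj i u f) where
  Hom x y := SHom x y
  id x := mkSHom x x 1 (fun β hβ => by rwa [one_mul, inv_one, mul_one])
  comp {x y z} m n :=
    Quotient.lift₂
      (fun (a : { α : Aut u // SCond x.obj y.obj α })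
           (b : { α : Aut u // SCond y.obj z.obj α }) =>
        mkSHom x z (b.1 * a.1) (by
          intro γ hγ
          have h1 : b.1 * a.1 * γ * (b.1 * a.1)⁻¹ = b.1 * (a.1 * γ * a.1⁻¹) * b.1⁻¹ := by
            group
          rw [h1]
          exact b.2 _ (a.2 γ hγ)))
      (by
        intro a b a' b' ha hb
        apply Quotient.sound
        have h1 : b.1 * a.1 * (b'.1 * a'.1)⁻¹ =
            b.1 * (a.1 * a'.1⁻¹) * b.1⁻¹ * (b.1 * b'.1⁻¹) := by group
        show b.1 * a.1 * (b'.1 * a'.1)⁻¹ ∈ stab z.obj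
        rw [h1]
        exact mul_mem (b.2 _ ha) hb)
      m n
  id_comp {x y} m := by
    refine Quotient.inductionOn m (fun a => Quotient.sound ?_)
    show a.1 * 1 * a.1⁻¹ ∈ stab y.obj
    rw [mul_one, mul_inv_cancel]
    exact one_mem _
  comp_id {x y} m := by
    refine Quotient.inductionOn m (fun a => Quotient.sound ?_)
    show 1 * a.1 * a.1⁻¹ ∈ stab y.obj
    rw [one_mul, mul_inv_cancel]
    exact one_mem _
  assoc {x y z w} m n p := by
    refine Quotient.inductionOn₃ m n p (fun a b c => Quotient.sound ?_)
    show c.1 * (b.1 * a.1) * (c.1 * b.1 * a.1)⁻¹ ∈ stab w.obj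
    have h1 : c.1 * (b.1 * a.1) * (c.1 * b.1 * a.1)⁻¹ = 1 := by group
    rw [h1]
    exact one_mem _
/-!
For `α ∈ Aut(u)`, the condition `χ(x) ⊆ α⁻¹·χ(y)·α` says exactly that the stabilizer of `x`
is contained in that of the translate `α⁻¹ ∘ y` of `y`. Since `χ` is full, this inclusion comes
from a morphism `α⁻¹ ∘ y ⟶ x` of `C̃`, i.e. a `z` with `x ∘ i(z) = α⁻¹ ∘ y`; since `χ` is
faithful with values in a poset, `C̃` is thin and `z` is unique. The coset `χ(y)·α` is determined
by `α⁻¹ ∘ y`, so `z` depends only on the coset, and for the same reason `F` is faithful.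
Ultrahomogeneity turns every `z : b ⟶ a` of `C` into an automorphism carrying `y` to `x ∘ i(z)`,
which makes `F` full, and `F` is essentially surjective because `f_a` lies over `a`.
-/

namespace Aut

variable {X : D}

@[simp] lemma mul_hom (a b : Aut X) : (a * b).hom = b.hom ≫ a.hom := rfl

@[simp] lemma mul_inv (a b : Aut X) : (a * b).inv = a.inv ≫ b.inv := rfl

@[simp] lemma inv_hom (a : Aut X) : a⁻¹.hom = a.inv := rfl

@[simp] lemma one_inv : (1 : Aut X).inv = 𝟙 X := rfl

lemma comp_hom_eq_iff (a : Aut X) {W : D} {g h : W ⟶ X} : g ≫ a.hom = h ↔ g = h ≫ a.inv :=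
  (Iso.eq_comp_inv a).symm

end Aut

section Galois

variable {i u f}

lemma mem_stab_iff {x : TildeObj i u f} {β : Aut u} : β ∈ stab x ↔ x.hom ≫ β.hom = x.hom :=
  Iff.rfl

lemma stab_le_of_hom {x y : TildeObj i u f} (m : y ⟶ x) : stab x ≤ stab y :=
  leOfHom ((chi i u f).map m.op)

def TildeObj.translate (y : TildeObj i u f) (α : Aut u) : TildeObj i u f where
  left := y.left
  hom := y.hom ≫ α.inv
  compat := by
    obtain ⟨β, hβ⟩ := y.compat
    exact ⟨α⁻¹ * β, by rw [hβ, Aut.mul_hom, Aut.inv_hom, Category.assoc]⟩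

lemma mem_stab_translate_iff {y : TildeObj i u f} {α β : Aut u} :
    β ∈ stab (y.translate α) ↔ α * β * α⁻¹ ∈ stab y := by
  simp only [mem_stab_iff, TildeObj.translate, Aut.mul_hom, Aut.inv_hom, ← Category.assoc]
  exact (Aut.comp_hom_eq_iff α).symm

lemma sCond_iff_stab_le {x y : TildeObj i u f} {α : Aut u} :
    SCond x y α ↔ stab x ≤ stab (y.translate α) :=
  forall₂_congr fun _ _ => mem_stab_translate_iff.symm

lemma mul_inv_mem_stab_iff {y : TildeObj i u f} {α β : Aut u} :
    α * β⁻¹ ∈ stab y ↔ y.hom ≫ α.inv = y.hom ≫ β.inv := by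
  rw [mem_stab_iff, Aut.mul_hom, Aut.inv_hom, ← Category.assoc, Aut.comp_hom_eq_iff, eq_comm]

lemma GaloisProp.subsingleton_hom (hGal : GaloisProp i u f) (x y : TildeObj i u f) : Subsingleton (x ⟶ y) :=
  haveI := hGal.2.1
  ⟨fun _ _ => Quiver.Hom.op_inj ((chi i u f).map_injective (Subsingleton.elim _ _))⟩

lemma GaloisProp.nonempty_hom_of_stab_le (hGal : GaloisProp i u f) {x y : TildeObj i u f} (h : stab x ≤ stab y) :
    Nonempty (y ⟶ x) :=
  haveI := hGal.1
  ⟨((chi i u f).preimage (homOfLE h : (chi i u f).obj (op x) ⟶ (chi i u f).obj (op y))).unop⟩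

lemma GaloisProp.existsUnique_map_comp_eq (hGal : GaloisProp i u f) {x y : TildeObj i u f}
    {α : Aut u} (hα : SCond x y α) : ∃! z : y.left ⟶ x.left, i.map z ≫ x.hom = y.hom ≫ α.inv := by
  obtain ⟨m⟩ := hGal.nonempty_hom_of_stab_le (sCond_iff_stab_le.1 hα)
  have := hGal.subsingleton_hom (y.translate α) x
  exact ⟨m.1, m.2, fun z hz =>
    congrArg Subtype.val (Subsingleton.elim (⟨z, hz⟩ : y.translate α ⟶ x) m)⟩

variable (hGal : GaloisProp i u f)

noncomputable def sHomToHom {x y : SObj i u f} (m : x ⟶ y) : y.obj.left ⟶ x.obj.left :=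
  Quotient.lift (fun a : { α : Aut u // SCond x.obj y.obj α } =>
      (hGal.existsUnique_map_comp_eq a.2).choose)
    (fun a b hab => (hGal.existsUnique_map_comp_eq b.2).unique
      (by rw [(hGal.existsUnique_map_comp_eq a.2).choose_spec.1, mul_inv_mem_stab_iff.1 hab])
      (hGal.existsUnique_map_comp_eq b.2).choose_spec.1)
    m

lemma map_sHomToHom_mkSHom_comp {x y : SObj i u f} {α : Aut u} (hα : SCond x.obj y.obj α) :
    i.map (sHomToHom hGal (mkSHom x y α hα)) ≫ x.obj.hom = y.obj.hom ≫ α.inv :=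
  (hGal.existsUnique_map_comp_eq hα).choose_spec.1

lemma sHomToHom_mkSHom_eq {x y : SObj i u f} {α : Aut u} (hα : SCond x.obj y.obj α)
    {z : y.obj.left ⟶ x.obj.left} (hz : i.map z ≫ x.obj.hom = y.obj.hom ≫ α.inv) :
    sHomToHom hGal (mkSHom x y α hα) = z :=
  (hGal.existsUnique_map_comp_eq hα).unique (map_sHomToHom_mkSHom_comp hGal hα) hz

lemma sHomToHom_comp {x y z : SObj i u f} {α β : Aut u} (hα : SCond x.obj y.obj α)
    (hβ : SCond y.obj z.obj β) :
    sHomToHom hGal (mkSHom x y α hα ≫ mkSHom y z β hβ) =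
      sHomToHom hGal (mkSHom y z β hβ) ≫ sHomToHom hGal (mkSHom x y α hα) := by
  refine sHomToHom_mkSHom_eq hGal _ ?_
  rw [Functor.map_comp, Category.assoc, map_sHomToHom_mkSHom_comp hGal hα, ← Category.assoc,
    map_sHomToHom_mkSHom_comp hGal hβ, Aut.mul_inv, Category.assoc]

noncomputable def sFunctor : SObj i u f ⥤ Cᵒᵖ where
  obj x := op x.obj.left
  map m := (sHomToHom hGal m).op
  map_id x := congrArg Quiver.Hom.op (sHomToHom_mkSHom_eq hGal _ (by simp))
  map_comp {x y z} m n := by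
    induction m using Quotient.inductionOn with | h a => ?_
    induction n using Quotient.inductionOn with | h b => ?_
    exact congrArg Quiver.Hom.op (sHomToHom_comp hGal a.2 b.2)

lemma sFunctor_full (hultra : IsUltrahomog i u) : (sFunctor hGal).Full where
  map_surjective {x y} g := by
    obtain ⟨k, hk⟩ := hultra (g.unop : y.obj.left ⟶ x.obj.left) y.obj.hom x.obj.hom
    have hα : SCond x.obj y.obj k.symm :=
      sCond_iff_stab_le.2 (stab_le_of_hom (⟨g.unop, hk.symm⟩ : y.obj.translate k.symm ⟶ x.obj))
    exact ⟨mkSHom x y k.symm hα, congrArg Quiver.Hom.op (sHomToHom_mkSHom_eq hGal hα hk.symm)⟩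

lemma sFunctor_faithful : (sFunctor hGal).Faithful where
  map_injective {x y} m n h := by
    induction m using Quotient.inductionOn with | h a => ?_
    induction n using Quotient.inductionOn with | h b => ?_
    refine Quotient.sound (mul_inv_mem_stab_iff.2 ?_)
    rw [← map_sHomToHom_mkSHom_comp hGal a.2, ← map_sHomToHom_mkSHom_comp hGal b.2]
    exact congrArg (i.map · ≫ x.obj.hom) (Quiver.Hom.op_inj h)

lemma sFunctor_essSurj : (sFunctor hGal).EssSurj where
  mem_essImage c := ⟨⟨⟨c.unop, f c.unop, 1, (Category.comp_id _).symm⟩⟩, ⟨Iso.refl _⟩⟩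

end Galois

theorem statement_19 (hultra : IsUltrahomog i u)
    (hGal : GaloisProp i u f) :
    ∃ F : SObj i u f ⥤ Cᵒᵖ,
      F.IsEquivalence ∧
      ∃ hobj : ∀ x : SObj i u f, F.obj x = op x.obj.left,
        ∀ (x y : SObj i u f) (α : Aut u) (hα : SCond x.obj y.obj α),
          i.map ((eqToHom (hobj x).symm ≫ F.map (mkSHom x y α hα) ≫
              eqToHom (hobj y)).unop) ≫ x.obj.hom =
            y.obj.hom ≫ α.inv := by
  have := sFunctor_full hGal hultra
  have := sFunctor_faithful hGal
  have := sFunctor_essSurj hGal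
  refine ⟨sFunctor hGal, { }, fun _ => rfl, fun x y α hα => ?_⟩
  change i.map ((eqToHom rfl ≫ (sHomToHom hGal (mkSHom x y α hα)).op ≫ eqToHom rfl).unop) ≫
    x.obj.hom = _
  rw [eqToHom_refl, eqToHom_refl, Category.id_comp, Category.comp_id]
  exact map_sHomToHom_mkSHom_comp hGal hα

end Fraisse
end
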